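/- arXiv:2305.10504 — 13 statements merged into one kernel-verified Lean document; each statement's English description precedes it below -/
import Mathlib

section
/- Theorem 1, parts 1 and 2 (robust Bellman equation). Suppose (g,V) ∈ ℝ × (S → ℝ) satisfies the robust Bellman equation V(s) = Σ_a π(a|s)·(r(s,a) − g + min_{p ∈ 𝒫(s,a)} p·V) for every s ∈ S, where each minimum over 𝒫(s,a) is attained, and let P_V be a transition-kernel selection with P_V(s,a) ∈ 𝒫(s,a) attaining min_{p ∈ 𝒫(s,a)} p·V for every (s,a). Then: (i) for every transition-kernel selection P and every state s for which the average reward g^π_P(s) exists (i.e. the Cesàro limit converges), one has g ≤ g^π_P(s); and (ii) for the selection P_V the average reward g^π_{P_V}(s) exists for every state s and equals g. In particular g is the minimum over kernel selections of the average reward, attained at P_V. -/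
/-- One step of the state-transition operator induced by policy `π` and kernel `P`:
`(P^π v)(s) = ∑_a π(a|s) ∑_{s'} P(s,a)(s') v(s')`. -/
noncomputable def kernelStep {S A : Type*} [Fintype S] [Fintype A]
    (π : S → A → ℝ) (P : S → A → S → ℝ) (v : S → ℝ) : S → ℝ :=
  fun s => ∑ a, π s a * ∑ s', P s a s' * v s'

/-- The Cesàro average sequence `T ↦ (1/T) ∑_{t<T} ((P^π)^t r_π)(s)`. -/
noncomputable def cesaro {S A : Type*} [Fintype S] [Fintype A]
    (π : S → A → ℝ) (P : S → A → S → ℝ) (r : S → A → ℝ) (s : S) (T : ℕ) : ℝ :=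
  (T : ℝ)⁻¹ * ∑ t ∈ Finset.range T, (kernelStep π P)^[t] (fun s0 => ∑ a, π s0 a * r s0 a) s

section Helpers

variable {S : Type*} [Fintype S]

/-- Step operator of a plain stochastic matrix. -/
noncomputable def mstep (M : S → S → ℝ) (v : S → ℝ) : S → ℝ :=
  fun s => ∑ s', M s s' * v s'

lemma mstep_affine (M : S → S → ℝ) (h1 : ∀ s, ∑ s', M s s' = 1)
    (c : ℝ) (u w : S → ℝ) :
    mstep M (fun x => c + u x - w x) = fun x => c + mstep M u x - mstep M w x := by
  funext s
  have h : ∀ s', M s s' * (c + u s' - w s') =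
      M s s' * c + (M s s' * u s' - M s s' * w s') := by intro s'; ring
  simp only [mstep, h, Finset.sum_add_distrib, Finset.sum_sub_distrib, ← Finset.sum_mul, h1 s]
  ring

lemma mstep_iter_affine (M : S → S → ℝ) (h1 : ∀ s, ∑ s', M s s' = 1)
    (c : ℝ) (u w : S → ℝ) (t : ℕ) :
    (mstep M)^[t] (fun x => c + u x - w x)
      = fun x => c + (mstep M)^[t] u x - (mstep M)^[t] w x := by
  induction t generalizing u w with
  | zero => simp
  | succ t ih =>
    rw [Function.iterate_succ_apply, mstep_affine M h1, ih]
    funext x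
    rw [Function.iterate_succ_apply, Function.iterate_succ_apply]

lemma mstep_mono (M : S → S → ℝ) (h0 : ∀ s s', 0 ≤ M s s')
    (u w : S → ℝ) (huw : ∀ s, u s ≤ w s) (s : S) : mstep M u s ≤ mstep M w s :=
  Finset.sum_le_sum fun s' _ => mul_le_mul_of_nonneg_left (huw s') (h0 s s')

lemma mstep_iter_mono (M : S → S → ℝ) (h0 : ∀ s s', 0 ≤ M s s')
    (u w : S → ℝ) (huw : ∀ s, u s ≤ w s) (t : ℕ) (s : S) :
    (mstep M)^[t] u s ≤ (mstep M)^[t] w s := by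
  induction t generalizing s with
  | zero => simpa using huw s
  | succ t ih =>
    rw [Function.iterate_succ_apply', Function.iterate_succ_apply']
    exact mstep_mono M h0 _ _ ih s

lemma mstep_iter_bound (M : S → S → ℝ) (h0 : ∀ s s', 0 ≤ M s s')
    (h1 : ∀ s, ∑ s', M s s' = 1)
    (v : S → ℝ) (B : ℝ) (hB : ∀ s, |v s| ≤ B) (t : ℕ) (s : S) :
    |(mstep M)^[t] v s| ≤ B := by
  induction t generalizing s with
  | zero => simpa using hB s
  | succ t ih =>
    rw [Function.iterate_succ_apply']
    calc |mstep M ((mstep M)^[t] v) s| ≤ ∑ s', |M s s' * (mstep M)^[t] v s'| :=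
          Finset.abs_sum_le_sum_abs _ _
      _ = ∑ s', M s s' * |(mstep M)^[t] v s'| := by
          refine Finset.sum_congr rfl fun s' _ => ?_
          rw [abs_mul, abs_of_nonneg (h0 s s')]
      _ ≤ ∑ s', M s s' * B :=
          Finset.sum_le_sum fun s' _ => mul_le_mul_of_nonneg_left (ih s') (h0 s s')
      _ = B := by rw [← Finset.sum_mul, h1 s, one_mul]

lemma cesaro_key_le (M : S → S → ℝ) (h0 : ∀ s s', 0 ≤ M s s')
    (h1 : ∀ s, ∑ s', M s s' = 1)
    (g : ℝ) (V rπ : S → ℝ) (hge : ∀ s, g + V s - mstep M V s ≤ rπ s) (T : ℕ) (s : S) :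
    (T : ℝ) * g + V s - (mstep M)^[T] V s
      ≤ ∑ t ∈ Finset.range T, (mstep M)^[t] rπ s := by
  have key : ∀ t, g + (mstep M)^[t] V s - (mstep M)^[t+1] V s ≤ (mstep M)^[t] rπ s := by
    intro t
    have h := mstep_iter_mono M h0 _ _ hge t s
    rw [mstep_iter_affine M h1 g V (mstep M V) t] at h
    rwa [← Function.iterate_succ_apply] at h
  have htel := Finset.sum_range_sub' (f := fun t => (mstep M)^[t] V s) T
  calc (T : ℝ) * g + V s - (mstep M)^[T] V s
      = ∑ _t ∈ Finset.range T, g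
          + ∑ t ∈ Finset.range T, ((mstep M)^[t] V s - (mstep M)^[t+1] V s) := by
        rw [htel]; simp [Finset.sum_const]; ring
    _ = ∑ t ∈ Finset.range T, (g + ((mstep M)^[t] V s - (mstep M)^[t+1] V s)) :=
        (Finset.sum_add_distrib).symm
    _ ≤ ∑ t ∈ Finset.range T, (mstep M)^[t] rπ s :=
        Finset.sum_le_sum fun t _ => by have := key t; linarith

lemma cesaro_key_ge (M : S → S → ℝ) (h0 : ∀ s s', 0 ≤ M s s')
    (h1 : ∀ s, ∑ s', M s s' = 1)
    (g : ℝ) (V rπ : S → ℝ) (hle : ∀ s, rπ s ≤ g + V s - mstep M V s) (T : ℕ) (s : S) :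
    ∑ t ∈ Finset.range T, (mstep M)^[t] rπ s
      ≤ (T : ℝ) * g + V s - (mstep M)^[T] V s := by
  have key : ∀ t, (mstep M)^[t] rπ s ≤ g + (mstep M)^[t] V s - (mstep M)^[t+1] V s := by
    intro t
    have h := mstep_iter_mono M h0 _ _ hle t s
    rw [mstep_iter_affine M h1 g V (mstep M V) t] at h
    rwa [← Function.iterate_succ_apply] at h
  have htel := Finset.sum_range_sub' (f := fun t => (mstep M)^[t] V s) T
  calc ∑ t ∈ Finset.range T, (mstep M)^[t] rπ s
      ≤ ∑ t ∈ Finset.range T, (g + ((mstep M)^[t] V s - (mstep M)^[t+1] V s)) :=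
        Finset.sum_le_sum fun t _ => by have := key t; linarith
    _ = ∑ _t ∈ Finset.range T, g
          + ∑ t ∈ Finset.range T, ((mstep M)^[t] V s - (mstep M)^[t+1] V s) :=
        Finset.sum_add_distrib
    _ = (T : ℝ) * g + V s - (mstep M)^[T] V s := by
        rw [htel]; simp [Finset.sum_const]; ring

end Helpers

theorem robust_bellman_parts_1_2
    {S A : Type*} [Fintype S] [Nonempty S] [Fintype A] [Nonempty A]
    (r : S → A → ℝ) (π : S → A → ℝ)
    (hπ : ∀ s, (∀ a, 0 ≤ π s a) ∧ ∑ a, π s a = 1)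
    (U : S → A → Set (S → ℝ))
    (hUne : ∀ s a, (U s a).Nonempty)
    (hUsimplex : ∀ s a, ∀ p ∈ U s a, (∀ s', 0 ≤ p s') ∧ ∑ s', p s' = 1)
    (g : ℝ) (V : S → ℝ)
    (PV : S → A → S → ℝ)
    (hPVmem : ∀ s a, PV s a ∈ U s a)
    (hPVmin : ∀ s a, ∀ p ∈ U s a, ∑ s', PV s a s' * V s' ≤ ∑ s', p s' * V s')
    (hBellman : ∀ s, V s = ∑ a, π s a * (r s a - g + ∑ s', PV s a s' * V s')) :
    (∀ P : S → A → S → ℝ, (∀ s a, P s a ∈ U s a) →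
      ∀ (s : S) (L : ℝ),
        Filter.Tendsto (cesaro π P r s) Filter.atTop (nhds L) → g ≤ L)
    ∧
    (∀ s : S, Filter.Tendsto (cesaro π PV r s) Filter.atTop (nhds g)) := by
  classical
  set rπ : S → ℝ := fun s0 => ∑ a, π s0 a * r s0 a with hrπdef
  -- bound on V
  obtain ⟨B, hB0, hBV⟩ : ∃ B, 0 ≤ B ∧ ∀ s, |V s| ≤ B :=
    ⟨∑ s, |V s|, Finset.sum_nonneg fun _ _ => abs_nonneg _,
      fun s => Finset.single_le_sum (f := fun s => |V s|)
        (fun _ _ => abs_nonneg _) (Finset.mem_univ s)⟩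
  -- facts for a generic stochastic kernel P
  have hMfacts : ∀ P : S → A → S → ℝ, (∀ s a, P s a ∈ U s a) →
      (∀ s s', 0 ≤ ∑ a, π s a * P s a s') ∧
      (∀ s, ∑ s', ∑ a, π s a * P s a s' = 1) ∧
      kernelStep π P = mstep (fun s s' => ∑ a, π s a * P s a s') := by
    intro P hP
    refine ⟨?_, ?_, ?_⟩
    · intro s s'
      exact Finset.sum_nonneg fun a _ =>
        mul_nonneg ((hπ s).1 a) ((hUsimplex s a _ (hP s a)).1 s')
    · intro s
      rw [Finset.sum_comm]
      calc ∑ a, ∑ s', π s a * P s a s' = ∑ a, π s a * ∑ s', P s a s' := by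
            simp [Finset.mul_sum]
        _ = ∑ a, π s a * 1 := by
            refine Finset.sum_congr rfl fun a _ => ?_
            rw [(hUsimplex s a _ (hP s a)).2]
        _ = 1 := by simp [(hπ s).2]
    · funext v s
      simp only [kernelStep, mstep, Finset.mul_sum, Finset.sum_mul]
      rw [Finset.sum_comm]
      exact Finset.sum_congr rfl fun s' _ => Finset.sum_congr rfl fun a _ => by ring
  -- exact Bellman identity for PV
  have hrπ : ∀ s, rπ s = g + V s - kernelStep π PV V s := by
    intro s
    have h := hBellman s
    have hexp : ∑ a, π s a * (r s a - g + ∑ s', PV s a s' * V s')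
        = rπ s - g + kernelStep π PV V s := by
      simp only [hrπdef, kernelStep, mul_sub, mul_add, Finset.sum_add_distrib,
        Finset.sum_sub_distrib, ← Finset.sum_mul]
      rw [(hπ s).2]
      ring
    rw [hexp] at h
    linarith
  -- tendsto of the error bound
  have hz : Filter.Tendsto (fun T : ℕ => 2 * B / (T : ℝ)) Filter.atTop (nhds 0) :=
    tendsto_const_div_atTop_nhds_zero_nat (2 * B)
  constructor
  · intro P hP s L hT
    obtain ⟨hM0, hM1, hks⟩ := hMfacts P hP
    set M : S → S → ℝ := fun s s' => ∑ a, π s a * P s a s' with hMdef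
    have hge : ∀ s0, g + V s0 - mstep M V s0 ≤ rπ s0 := by
      intro s0
      have hmin : kernelStep π PV V s0 ≤ kernelStep π P V s0 :=
        Finset.sum_le_sum fun a _ =>
          mul_le_mul_of_nonneg_left (hPVmin s0 a _ (hP s0 a)) ((hπ s0).1 a)
      have h2 : kernelStep π P V s0 = mstep M V s0 := by rw [hks]
      rw [hrπ s0]
      linarith
    have hces : ∀ T : ℕ, 1 ≤ T → g - 2 * B / (T : ℝ) ≤ cesaro π P r s T := by
      intro T hT1
      have hTpos : (0 : ℝ) < T := by exact_mod_cast hT1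
      have h1 := cesaro_key_le M hM0 hM1 g V rπ hge T s
      have h2 := mstep_iter_bound M hM0 hM1 V B hBV T s
      have h3 := hBV s
      have hub : (T : ℝ) * g - 2 * B ≤ ∑ t ∈ Finset.range T, (mstep M)^[t] rπ s := by
        have := abs_le.mp h2
        have := abs_le.mp h3
        linarith
      have hc : cesaro π P r s T = (∑ t ∈ Finset.range T, (mstep M)^[t] rπ s) / T := by
        rw [cesaro, hks, inv_mul_eq_div]
      rw [hc]
      calc g - 2 * B / (T : ℝ) = ((T : ℝ) * g - 2 * B) / T := by
            rw [eq_div_iff hTpos.ne']; field_simp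
        _ ≤ (∑ t ∈ Finset.range T, (mstep M)^[t] rπ s) / T := by gcongr
    have hlow : Filter.Tendsto (fun T : ℕ => g - 2 * B / (T : ℝ)) Filter.atTop (nhds g) := by
      have := hz.const_sub g
      simpa using this
    exact le_of_tendsto_of_tendsto hlow hT (Filter.eventually_atTop.mpr ⟨1, hces⟩)
  · intro s
    obtain ⟨hM0, hM1, hks⟩ := hMfacts PV hPVmem
    set M : S → S → ℝ := fun s s' => ∑ a, π s a * PV s a s' with hMdef
    have heq : ∀ s0, rπ s0 = g + V s0 - mstep M V s0 := by
      intro s0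
      have h2 : kernelStep π PV V s0 = mstep M V s0 := by rw [hks]
      rw [hrπ s0, h2]
    have hbnd : ∀ T : ℕ, 1 ≤ T → |cesaro π PV r s T - g| ≤ 2 * B / (T : ℝ) := by
      intro T hT1
      have hTpos : (0 : ℝ) < T := by exact_mod_cast hT1
      have h1 := cesaro_key_le M hM0 hM1 g V rπ (fun s0 => (heq s0).ge) T s
      have h1' := cesaro_key_ge M hM0 hM1 g V rπ (fun s0 => (heq s0).le) T s
      have h2 := abs_le.mp (mstep_iter_bound M hM0 hM1 V B hBV T s)
      have h3 := abs_le.mp (hBV s)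
      have hc : cesaro π PV r s T = (∑ t ∈ Finset.range T, (mstep M)^[t] rπ s) / T := by
        rw [cesaro, hks, inv_mul_eq_div]
      have hnum : |(∑ t ∈ Finset.range T, (mstep M)^[t] rπ s) - (T : ℝ) * g| ≤ 2 * B := by
        rw [abs_le]
        constructor <;> linarith [h2.1, h2.2, h3.1, h3.2]
      have hdiff : cesaro π PV r s T - g
          = ((∑ t ∈ Finset.range T, (mstep M)^[t] rπ s) - (T : ℝ) * g) / T := by
        rw [hc, sub_div, mul_comm (T:ℝ) g, mul_div_assoc, div_self hTpos.ne', mul_one]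
      rw [hdiff, abs_div, abs_of_pos hTpos]
      gcongr
    have h0 : Filter.Tendsto (fun T : ℕ => cesaro π PV r s T - g) Filter.atTop (nhds 0) := by
      refine squeeze_zero_norm' ?_ hz
      exact Filter.eventually_atTop.mpr ⟨1, fun T hT => by simpa using hbnd T hT⟩
    have := h0.add_const g
    simpa using this
end

section
/- Theorem 1, part 3 (structure of solutions to the robust Bellman equation). Suppose (g,V) ∈ ℝ × (S → ℝ) satisfies the robust Bellman equation V(s) = Σ_a π(a|s)·(r(s,a) − g + min_{p ∈ 𝒫(s,a)} p·V) for every s ∈ S, where each minimum over 𝒫(s,a) is attained, and let P_V be a transition-kernel selection with P_V(s,a) ∈ 𝒫(s,a) attaining min_{p ∈ 𝒫(s,a)} p·V for every (s,a). Assume further that (a) every h : S → ℝ with P_V^π h = h is a constant vector (a consequence of the unichain assumption), and (b) for every s the series W(s) := Σ_{t=0}^{∞} ((P_V^π)^t (r_π − g·e))(s) converges (W is the relative value function V^π_{P_V}). Then there exists c ∈ ℝ such that V = W + c·e. -/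
private lemma kernelStep_sub {S A : Type*} [Fintype S] [Fintype A]
    (π : S → A → ℝ) (P : S → A → S → ℝ) (u v : S → ℝ) :
    kernelStep π P (fun s => u s - v s)
      = fun s => kernelStep π P u s - kernelStep π P v s := by
  funext s
  simp [kernelStep, mul_sub, Finset.sum_sub_distrib]

private lemma kernelStep_tsum {S A : Type*} [Fintype S] [Fintype A]
    (π : S → A → ℝ) (P : S → A → S → ℝ) (F : ℕ → S → ℝ)
    (hF : ∀ s, Summable (fun t => F t s)) (s : S) :
    kernelStep π P (fun s0 => ∑' t, F t s0) s = ∑' t, kernelStep π P (F t) s := by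
  unfold kernelStep
  have h1 : ∀ a : A, ∑ s', P s a s' * ∑' t, F t s'
      = ∑' t, ∑ s', P s a s' * F t s' := by
    intro a
    rw [Summable.tsum_finsetSum (fun s' (_ : s' ∈ Finset.univ) => (hF s').mul_left (P s a s'))]
    exact Finset.sum_congr rfl fun s' _ => (tsum_mul_left).symm
  have hsum2 : ∀ a : A, Summable (fun t => π s a * ∑ s', P s a s' * F t s') := by
    intro a
    have h4 : Summable (fun t => ∑ s', P s a s' * F t s') :=
      summable_sum (fun s' _ => (hF s').mul_left (P s a s'))
    exact h4.mul_left _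
  calc ∑ a, π s a * ∑ s', P s a s' * ∑' t, F t s'
      = ∑ a, ∑' t, π s a * ∑ s', P s a s' * F t s' := by
        refine Finset.sum_congr rfl fun a _ => ?_
        rw [h1 a, tsum_mul_left]
    _ = ∑' t, ∑ a, π s a * ∑ s', P s a s' * F t s' :=
        (Summable.tsum_finsetSum (fun a (_ : a ∈ Finset.univ) => hsum2 a)).symm

theorem robust_bellman_part_3
    {S A : Type*} [Fintype S] [Nonempty S] [Fintype A] [Nonempty A]
    (r : S → A → ℝ) (π : S → A → ℝ)
    (hπ : ∀ s, (∀ a, 0 ≤ π s a) ∧ ∑ a, π s a = 1)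
    (U : S → A → Set (S → ℝ))
    (hUne : ∀ s a, (U s a).Nonempty)
    (hUsimplex : ∀ s a, ∀ p ∈ U s a, (∀ s', 0 ≤ p s') ∧ ∑ s', p s' = 1)
    (g : ℝ) (V : S → ℝ)
    (PV : S → A → S → ℝ)
    (hPVmem : ∀ s a, PV s a ∈ U s a)
    (hPVmin : ∀ s a, ∀ p ∈ U s a, ∑ s', PV s a s' * V s' ≤ ∑ s', p s' * V s')
    (hBellman : ∀ s, V s = ∑ a, π s a * (r s a - g + ∑ s', PV s a s' * V s'))
    -- (a) every fixed point of `P_V^π` is a constant vector (unichain consequence)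
    (hUnichain : ∀ h : S → ℝ, kernelStep π PV h = h → ∃ c : ℝ, ∀ s, h s = c)
    -- (b) the relative-value series converges at every state
    (hSummable : ∀ s : S,
      Summable (fun t : ℕ =>
        (kernelStep π PV)^[t] (fun s0 => (∑ a, π s0 a * r s0 a) - g) s)) :
    ∃ c : ℝ, ∀ s : S,
      V s = (∑' t : ℕ,
        (kernelStep π PV)^[t] (fun s0 => (∑ a, π s0 a * r s0 a) - g) s) + c := by
  set f : S → ℝ := fun s0 => (∑ a, π s0 a * r s0 a) - g with hf
  set T := kernelStep π PV with hT
  set W : S → ℝ := fun s => ∑' t, T^[t] f s with hW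
  -- V = f + T V
  have hV : ∀ s, V s = f s + T V s := by
    intro s
    rw [hBellman s]
    simp only [hf, hT, kernelStep, mul_add, mul_sub, Finset.sum_add_distrib,
      Finset.sum_sub_distrib, ← Finset.sum_mul, (hπ s).2, one_mul]
  -- W = f + T W
  have hWeq : ∀ s, W s = f s + T W s := by
    intro s
    have h0 : W s = T^[0] f s + ∑' t, T^[t + 1] f s := by
      simpa using (Summable.tsum_eq_zero_add (hSummable s))
    have h2 : T W s = ∑' t, T^[t + 1] f s := by
      have h3 := kernelStep_tsum π PV (fun t => T^[t] f) hSummable s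
      rw [← hT] at h3
      rw [hW, h3]
      exact tsum_congr fun t => by rw [Function.iterate_succ_apply']
    rw [h0, h2]
    simp
  -- V - W is a fixed point of T
  have hfix : T (fun s => V s - W s) = fun s => V s - W s := by
    rw [hT, kernelStep_sub]
    funext s
    have := hV s
    have := hWeq s
    rw [← hT]
    linarith [hV s, hWeq s]
  obtain ⟨c, hc⟩ := hUnichain _ hfix
  exact ⟨c, fun s => by have := hc s; linarith⟩
end

section
/- Lemma 1 (via Example 1): there is a robust MDP in which the relative value function of some worst-case transition kernel does not solve the robust Bellman equation. Concretely, let S = {1,2,3} with one action, reward vector r = (r₁,r₂,r₃) with r₃ > r₂, uncertainty sets 𝒫(1) = {δ₂, δ₃}, 𝒫(2) = {δ₃}, 𝒫(3) = {δ₂} (δ_i the point mass at state i). Let P₂ be the kernel choosing δ₃ at state 1, and set g := (r₂+r₃)/2, V := (r₁ − (3/4)r₂ − (1/4)r₃, (1/4)r₂ − (1/4)r₃, −(1/4)r₂ + (1/4)r₃). Then: (i) for both kernels P₁ (choosing δ₂ at state 1) and P₂, the average reward g^π_P(s) := lim_{T→∞}(1/T)Σ_{t<T}((P)^t r)(s)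 exists for all s and equals g, so P₂ is a worst-case kernel; (ii) V satisfies the non-robust Bellman equation V(s) = r(s) − g + (P₂ V)(s) for all s (V is the relative value function V^π_{P₂}); but (iii) V does NOT satisfy the robust Bellman equation: V(1) ≠ r₁ − g + min(V(2), V(3)). -/
/-- Action of a one-action transition kernel on a value function:
`(P V)(s) = ∑_{s'} P(s)(s') V(s')`. -/
noncomputable def kernelAct (P : Fin 3 → Fin 3 → ℝ) (v : Fin 3 → ℝ) : Fin 3 → ℝ :=
  fun s => ∑ s', P s s' * v s'

/-- Kernel `P₁`: chooses `δ₂` at state 1 (index 0); `δ₃` at state 2; `δ₂` at state 3. -/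
noncomputable def P1 : Fin 3 → Fin 3 → ℝ := ![![0, 1, 0], ![0, 0, 1], ![0, 1, 0]]

/-- Kernel `P₂`: chooses `δ₃` at state 1 (index 0); `δ₃` at state 2; `δ₂` at state 3. -/
noncomputable def P2 : Fin 3 → Fin 3 → ℝ := ![![0, 0, 1], ![0, 0, 1], ![0, 1, 0]]

/-- The average reward `g = (r₂ + r₃)/2`. -/
noncomputable def gEx (r : Fin 3 → ℝ) : ℝ := (r 1 + r 2) / 2

/-- The relative value function of the kernel `P₂`:
`V = (r₁ − (3/4)r₂ − (1/4)r₃, (1/4)r₂ − (1/4)r₃, −(1/4)r₂ + (1/4)r₃)`. -/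
noncomputable def VEx (r : Fin 3 → ℝ) : Fin 3 → ℝ :=
  ![r 0 - (3/4) * r 1 - (1/4) * r 2,
    (1/4) * r 1 - (1/4) * r 2,
    -((1/4) * r 1) + (1/4) * r 2]


open Filter Finset

noncomputable def altSeq (x y z : ℝ) : ℕ → ℝ :=
  fun t => if t = 0 then x else if Odd t then y else z

lemma altSeq_sum (x y z : ℝ) : ∀ k : ℕ,
    (∑ t ∈ range (2*k+1), altSeq x y z t = x + k * (y+z)) ∧
    (∑ t ∈ range (2*k+2), altSeq x y z t = x + y + k * (y+z)) := by
  intro k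
  induction k with
  | zero =>
    constructor
    · simp [altSeq]
    · simp [Finset.sum_range_succ, altSeq]
  | succ n ih =>
    have h1 : 2*(n+1)+1 = (2*n+2)+1 := by ring
    have h2 : 2*(n+1)+2 = (2*n+2)+1+1 := by ring
    have he : ¬ Odd (2*n+2) := by simp [Nat.odd_iff]
    have ho : Odd (2*n+2+1) := ⟨n+1, by ring⟩
    constructor
    · rw [h1, Finset.sum_range_succ, ih.2]
      rw [show altSeq x y z (2*n+2) = z by
        simp only [altSeq, if_neg (by omega : ¬ (2*n+2 = 0)), if_neg he]]
      push_cast; ring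
    · rw [h2, Finset.sum_range_succ, Finset.sum_range_succ, ih.2]
      rw [show altSeq x y z (2*n+2) = z by
        simp only [altSeq, if_neg (by omega : ¬ (2*n+2 = 0)), if_neg he],
        show altSeq x y z (2*n+2+1) = y by
        simp only [altSeq, if_neg (by omega : ¬ (2*n+2+1 = 0)), if_pos ho]]
      push_cast; ring

lemma altSeq_tendsto (x y z g : ℝ) (hg : g = (y+z)/2) :
    Tendsto (fun T : ℕ => (T:ℝ)⁻¹ * ∑ t ∈ range T, altSeq x y z t) atTop (nhds g) := by
  set C := |x - g| + |x - z| with hC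
  have key : ∀ T : ℕ, 1 ≤ T →
      ‖(T:ℝ)⁻¹ * (∑ t ∈ range T, altSeq x y z t) - g‖ ≤ C / T := by
    intro T hT
    have hT0 : (0:ℝ) < T := by exact_mod_cast hT
    have habs : ∀ S : ℝ, (T:ℝ)⁻¹ * S - g = (S - T*g)/T := by
      intro S; field_simp
    rw [Real.norm_eq_abs, habs, abs_div, abs_of_pos hT0,
      div_le_div_iff_of_pos_right hT0]
    rcases Nat.even_or_odd T with ⟨k, hk⟩ | ⟨k, hk⟩
    · -- even, T ≥ 2, T = 2(k-1)+2
      obtain ⟨k', rfl⟩ : ∃ k', k = k'+1 := ⟨k-1, by omega⟩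
      have hTe : T = 2*k'+2 := by omega
      subst hTe
      rw [(altSeq_sum x y z k').2]
      have : x + y + k' * (y+z) - (2*k'+2 : ℕ) * g = x - z := by
        rw [hg]; push_cast; ring
      rw [this, hC]
      have := abs_nonneg (x - g)
      linarith
    · have hTe : T = 2*k+1 := by omega
      subst hTe
      rw [(altSeq_sum x y z k).1]
      have : x + k * (y+z) - (2*k+1 : ℕ) * g = x - g := by
        rw [hg]; push_cast; ring
      rw [this, hC]
      have := abs_nonneg (x - z)
      linarith
  have h0 : Tendsto (fun T : ℕ => (T:ℝ)⁻¹ * (∑ t ∈ range T, altSeq x y z t) - g)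
      atTop (nhds 0) := by
    apply squeeze_zero_norm' (a := fun T : ℕ => C / T)
    · exact Filter.eventually_atTop.2 ⟨1, key⟩
    · exact tendsto_const_div_atTop_nhds_zero_nat C
  have := h0.add_const g
  simpa using this

lemma P1_apply (v : Fin 3 → ℝ) : kernelAct P1 v = ![v 1, v 2, v 1] := by
  funext s; fin_cases s <;> simp [kernelAct, P1, Fin.sum_univ_three]

lemma P2_apply (v : Fin 3 → ℝ) : kernelAct P2 v = ![v 2, v 2, v 1] := by
  funext s; fin_cases s <;> simp [kernelAct, P2, Fin.sum_univ_three]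

lemma P1_iter (r : Fin 3 → ℝ) : ∀ t : ℕ,
    (kernelAct P1)^[t+1] r = if Even t then ![r 1, r 2, r 1] else ![r 2, r 1, r 2] := by
  intro t
  induction t with
  | zero => simp [P1_apply]
  | succ n ih =>
    rw [Function.iterate_succ_apply', ih]
    rcases Nat.even_or_odd n with h | h
    · rw [if_pos h, if_neg (by simp [Nat.even_add_one, h]), P1_apply]
      simp
    · rw [if_neg (by simpa [Nat.not_even_iff_odd] using h), if_pos (by simp [Nat.even_add_one, Nat.not_even_iff_odd, h]), P1_apply]
      simp

lemma P2_iter (r : Fin 3 → ℝ) : ∀ t : ℕ,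
    (kernelAct P2)^[t+1] r = if Even t then ![r 2, r 2, r 1] else ![r 1, r 1, r 2] := by
  intro t
  induction t with
  | zero => simp [P2_apply]
  | succ n ih =>
    rw [Function.iterate_succ_apply', ih]
    rcases Nat.even_or_odd n with h | h
    · rw [if_pos h, if_neg (by simp [Nat.even_add_one, h]), P2_apply]
      simp
    · rw [if_neg (by simpa [Nat.not_even_iff_odd] using h), if_pos (by simp [Nat.even_add_one, Nat.not_even_iff_odd, h]), P2_apply]
      simp

lemma tendsto_of_seq_eq (v : ℕ → ℝ) (x y z g : ℝ) (hg : g = (y+z)/2)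
    (h : ∀ t, v t = altSeq x y z t) :
    Tendsto (fun T : ℕ => (T:ℝ)⁻¹ * ∑ t ∈ range T, v t) atTop (nhds g) := by
  have : (fun T : ℕ => (T:ℝ)⁻¹ * ∑ t ∈ range T, v t)
      = fun T : ℕ => (T:ℝ)⁻¹ * ∑ t ∈ range T, altSeq x y z t := by
    funext T; congr 1; exact Finset.sum_congr rfl fun t _ => h t
  rw [this]
  exact altSeq_tendsto x y z g hg


theorem relative_value_of_worst_case_kernel_may_not_solve_robust_bellman
    (r : Fin 3 → ℝ) (hr : r 1 < r 2) :
    -- (i) both kernels have average reward `g` from every initial state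
    ((∀ s : Fin 3,
        Filter.Tendsto
          (fun T : ℕ => (T : ℝ)⁻¹ * ∑ t ∈ Finset.range T, (kernelAct P1)^[t] r s)
          Filter.atTop (nhds (gEx r)))
      ∧
      (∀ s : Fin 3,
        Filter.Tendsto
          (fun T : ℕ => (T : ℝ)⁻¹ * ∑ t ∈ Finset.range T, (kernelAct P2)^[t] r s)
          Filter.atTop (nhds (gEx r))))
    ∧
    -- (ii) `V` solves the non-robust Bellman equation for `P₂`
    (∀ s : Fin 3, VEx r s = r s - gEx r + ∑ s', P2 s s' * VEx r s')
    ∧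
    -- (iii) but `V` does not solve the robust Bellman equation
    VEx r 0 ≠ r 0 - gEx r + min (VEx r 1) (VEx r 2) := by
  have hgyz : ∀ y z : ℝ, ({y, z} : Set ℝ) = {r 1, r 2} → True := fun _ _ _ => trivial
  refine ⟨⟨?_, ?_⟩, ?_, ?_⟩
  · -- P1
    intro s
    fin_cases s
    · refine tendsto_of_seq_eq _ (r 0) (r 1) (r 2) _ (by simp [gEx]) fun t => ?_
      cases t with
      | zero => simp [altSeq]
      | succ n =>
        rw [P1_iter, altSeq]
        rcases Nat.even_or_odd n with h | h
        · rw [if_pos h, if_neg (by omega), if_pos (Nat.odd_add_one.2 (Nat.not_odd_iff_even.2 h))]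
          simp
        · rw [if_neg (by simpa [Nat.not_even_iff_odd] using h), if_neg (by omega),
            if_neg (by simp [Nat.odd_add_one, h])]
          simp
    · refine tendsto_of_seq_eq _ (r 1) (r 2) (r 1) _ (by simp [gEx]; ring) fun t => ?_
      cases t with
      | zero => simp [altSeq]
      | succ n =>
        rw [P1_iter, altSeq]
        rcases Nat.even_or_odd n with h | h
        · rw [if_pos h, if_neg (by omega), if_pos (Nat.odd_add_one.2 (Nat.not_odd_iff_even.2 h))]
          simp
        · rw [if_neg (by simpa [Nat.not_even_iff_odd] using h), if_neg (by omega),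
            if_neg (by simp [Nat.odd_add_one, h])]
          simp
    · refine tendsto_of_seq_eq _ (r 2) (r 1) (r 2) _ (by simp [gEx]) fun t => ?_
      cases t with
      | zero => simp [altSeq]
      | succ n =>
        rw [P1_iter, altSeq]
        rcases Nat.even_or_odd n with h | h
        · rw [if_pos h, if_neg (by omega), if_pos (Nat.odd_add_one.2 (Nat.not_odd_iff_even.2 h))]
          simp
        · rw [if_neg (by simpa [Nat.not_even_iff_odd] using h), if_neg (by omega),
            if_neg (by simp [Nat.odd_add_one, h])]
          simp
  · -- P2
    intro s
    fin_cases s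
    · refine tendsto_of_seq_eq _ (r 0) (r 2) (r 1) _ (by simp [gEx]; ring) fun t => ?_
      cases t with
      | zero => simp [altSeq]
      | succ n =>
        rw [P2_iter, altSeq]
        rcases Nat.even_or_odd n with h | h
        · rw [if_pos h, if_neg (by omega), if_pos (Nat.odd_add_one.2 (Nat.not_odd_iff_even.2 h))]
          simp
        · rw [if_neg (by simpa [Nat.not_even_iff_odd] using h), if_neg (by omega),
            if_neg (by simp [Nat.odd_add_one, h])]
          simp
    · refine tendsto_of_seq_eq _ (r 1) (r 2) (r 1) _ (by simp [gEx]; ring) fun t => ?_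
      cases t with
      | zero => simp [altSeq]
      | succ n =>
        rw [P2_iter, altSeq]
        rcases Nat.even_or_odd n with h | h
        · rw [if_pos h, if_neg (by omega), if_pos (Nat.odd_add_one.2 (Nat.not_odd_iff_even.2 h))]
          simp
        · rw [if_neg (by simpa [Nat.not_even_iff_odd] using h), if_neg (by omega),
            if_neg (by simp [Nat.odd_add_one, h])]
          simp
    · refine tendsto_of_seq_eq _ (r 2) (r 1) (r 2) _ (by simp [gEx]) fun t => ?_
      cases t with
      | zero => simp [altSeq]
      | succ n =>
        rw [P2_iter, altSeq]
        rcases Nat.even_or_odd n with h | h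
        · rw [if_pos h, if_neg (by omega), if_pos (Nat.odd_add_one.2 (Nat.not_odd_iff_even.2 h))]
          simp
        · rw [if_neg (by simpa [Nat.not_even_iff_odd] using h), if_neg (by omega),
            if_neg (by simp [Nat.odd_add_one, h])]
          simp
  · -- (ii)
    intro s
    fin_cases s <;> simp [VEx, gEx, P2, Fin.sum_univ_three] <;> ring
  · -- (iii)
    have h12 : VEx r 1 ≤ VEx r 2 := by
      simp [VEx]; linarith
    rw [min_eq_left h12]
    simp only [VEx, gEx]
    simp
    intro h
    linarith
end

section
/- Lemma 2 (optimal robust Bellman equation). Suppose (g,Q) ∈ ℝ × (S×A → ℝ) satisfies the optimal robust Bellman equation Q(s,a) = r(s,a) − g + min_{p ∈ 𝒫(s,a)} p·V_Q for all (s,a), where V_Q(s) := max_a Q(s,a) and each minimum over 𝒫(s,a) is attained. Let a* : S → A be a greedy policy, i.e. Q(s,a*(s)) = max_a Q(s,a) for every s, and let P_{V_Q} be a transition-kernel selection with P_{V_Q}(s,a) ∈ 𝒫(s,a) attaining min_{p ∈ 𝒫(s,a)} p·V_Q. Then: (i) V_Q(s) = r(s,a*(s)) − g + min_{p ∈ 𝒫(s,a*(s))}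 p·V_Q for all s, i.e. (g, V_Q) solves the robust Bellman equation for the greedy policy a*; (ii) for every transition-kernel selection P and every state s for which the Cesàro limit g^{a*}_P(s) := lim_{T→∞}(1/T)Σ_{t=0}^{T−1}((P^{a*})^t r_{a*})(s) exists, g ≤ g^{a*}_P(s); and (iii) for the selection P_{V_Q} this Cesàro limit exists for every s and equals g. -/
/-- One step of the state-transition operator induced by a deterministic policy `astar`
and kernel selection `P`: `(P^{a*} v)(s) = ∑_{s'} P(s, a*(s))(s') v(s')`. -/
noncomputable def detKernelStep {S A : Type*} [Fintype S]
    (astar : S → A) (P : S → A → S → ℝ) (v : S → ℝ) : S → ℝ :=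
  fun s => ∑ s', P s (astar s) s' * v s'

/-- The Cesàro average sequence `T ↦ (1/T) ∑_{t<T} ((P^{a*})^t r_{a*})(s)`. -/
noncomputable def detCesaro {S A : Type*} [Fintype S]
    (astar : S → A) (P : S → A → S → ℝ) (r : S → A → ℝ) (s : S) (T : ℕ) : ℝ :=
  (T : ℝ)⁻¹ * ∑ t ∈ Finset.range T,
    (detKernelStep astar P)^[t] (fun s0 => r s0 (astar s0)) s


section Aux
variable {S A : Type*} [Fintype S]

lemma expand_step (astar : S → A) (P : S → A → S → ℝ) (g : ℝ)
    (hP1 : ∀ s, ∑ s', P s (astar s) s' = 1) (u w : S → ℝ) (s : S) :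
    ∑ s', P s (astar s) s' * (g + u s' - w s')
      = g + detKernelStep astar P u s - detKernelStep astar P w s := by
  simp only [detKernelStep, mul_add, mul_sub, Finset.sum_add_distrib,
    Finset.sum_sub_distrib, ← Finset.sum_mul, hP1 s, one_mul]

lemma detStep_iter_le (astar : S → A) (P : S → A → S → ℝ) (rr VQ : S → ℝ) (g : ℝ)
    (hP0 : ∀ s s', 0 ≤ P s (astar s) s')
    (hP1 : ∀ s, ∑ s', P s (astar s) s' = 1)
    (hbase : ∀ s, g + VQ s - detKernelStep astar P VQ s ≤ rr s) :
    ∀ t s, g + (detKernelStep astar P)^[t] VQ s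
        - (detKernelStep astar P)^[t + 1] VQ s ≤ (detKernelStep astar P)^[t] rr s := by
  intro t
  induction t with
  | zero => intro s; simpa using hbase s
  | succ t ih =>
    intro s
    calc g + (detKernelStep astar P)^[t + 1] VQ s
          - (detKernelStep astar P)^[t + 1 + 1] VQ s
        = ∑ s', P s (astar s) s' * (g + (detKernelStep astar P)^[t] VQ s'
            - (detKernelStep astar P)^[t + 1] VQ s') := by
          simp only [Function.iterate_succ_apply']
          exact (expand_step astar P g hP1 _ _ s).symm
      _ ≤ ∑ s', P s (astar s) s' * (detKernelStep astar P)^[t] rr s' :=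
          Finset.sum_le_sum fun s' _ => mul_le_mul_of_nonneg_left (ih s') (hP0 s s')
      _ = (detKernelStep astar P)^[t + 1] rr s := by
          rw [Function.iterate_succ_apply']; rfl

lemma detStep_iter_eq (astar : S → A) (P : S → A → S → ℝ) (rr VQ : S → ℝ) (g : ℝ)
    (hP1 : ∀ s, ∑ s', P s (astar s) s' = 1)
    (hbase : ∀ s, g + VQ s - detKernelStep astar P VQ s = rr s) :
    ∀ t s, g + (detKernelStep astar P)^[t] VQ s
        - (detKernelStep astar P)^[t + 1] VQ s = (detKernelStep astar P)^[t] rr s := by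
  intro t
  induction t with
  | zero => intro s; simpa using hbase s
  | succ t ih =>
    intro s
    calc g + (detKernelStep astar P)^[t + 1] VQ s
          - (detKernelStep astar P)^[t + 1 + 1] VQ s
        = ∑ s', P s (astar s) s' * (g + (detKernelStep astar P)^[t] VQ s'
            - (detKernelStep astar P)^[t + 1] VQ s') := by
          simp only [Function.iterate_succ_apply']
          exact (expand_step astar P g hP1 _ _ s).symm
      _ = ∑ s', P s (astar s) s' * (detKernelStep astar P)^[t] rr s' :=
          Finset.sum_congr rfl fun s' _ => by rw [ih s']
      _ = (detKernelStep astar P)^[t + 1] rr s := by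
          rw [Function.iterate_succ_apply']; rfl

lemma detStep_iter_bound (astar : S → A) (P : S → A → S → ℝ) (VQ : S → ℝ) (M : ℝ)
    (hP0 : ∀ s s', 0 ≤ P s (astar s) s')
    (hP1 : ∀ s, ∑ s', P s (astar s) s' = 1)
    (hM : ∀ s, |VQ s| ≤ M) :
    ∀ t s, |(detKernelStep astar P)^[t] VQ s| ≤ M := by
  intro t
  induction t with
  | zero => intro s; simpa using hM s
  | succ t ih =>
    intro s
    rw [Function.iterate_succ_apply' _ t VQ]
    calc |∑ s', P s (astar s) s' * (detKernelStep astar P)^[t] VQ s'|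
        ≤ ∑ s', |P s (astar s) s' * (detKernelStep astar P)^[t] VQ s'| :=
          Finset.abs_sum_le_sum_abs _ _
      _ ≤ ∑ s', P s (astar s) s' * M := by
          refine Finset.sum_le_sum fun s' _ => ?_
          rw [abs_mul, abs_of_nonneg (hP0 s s')]
          exact mul_le_mul_of_nonneg_left (ih s') (hP0 s s')
      _ = M := by rw [← Finset.sum_mul, hP1 s, one_mul]


lemma telescope_aux (g : ℝ) (a : ℕ → ℝ) (T : ℕ) :
    ∑ t ∈ Finset.range T, (g + a t - a (t + 1)) = T * g + (a 0 - a T) := by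
  induction T with
  | zero => simp
  | succ T ih => rw [Finset.sum_range_succ, ih]; push_cast; ring

lemma tendsto_cesaro_aux (g : ℝ) (c : ℕ → ℝ) (M : ℝ) (hc : ∀ T, |c T| ≤ M) :
    Filter.Tendsto (fun T : ℕ => g + (T : ℝ)⁻¹ * c T) Filter.atTop (nhds g) := by
  have h0 : Filter.Tendsto (fun T : ℕ => (T : ℝ)⁻¹ * c T) Filter.atTop (nhds 0) := by
    apply squeeze_zero_norm (a := fun T : ℕ => (T : ℝ)⁻¹ * M)
    · intro n
      rw [norm_mul, Real.norm_eq_abs, Real.norm_eq_abs, abs_inv, Nat.abs_cast]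
      exact mul_le_mul_of_nonneg_left (hc n) (by positivity)
    · have := tendsto_one_div_atTop_nhds_zero_nat.mul_const M
      simpa [one_div] using this
  simpa using tendsto_const_nhds.add h0

end Aux

theorem optimal_robust_bellman
    {S A : Type*} [Fintype S] [Nonempty S] [Fintype A] [Nonempty A]
    (r : S → A → ℝ)
    (U : S → A → Set (S → ℝ))
    (hUne : ∀ s a, (U s a).Nonempty)
    (hUsimplex : ∀ s a, ∀ p ∈ U s a, (∀ s', 0 ≤ p s') ∧ ∑ s', p s' = 1)
    (g : ℝ) (Q : S → A → ℝ)
    -- the value function `V_Q(s) = max_a Q(s,a)`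
    (VQ : S → ℝ) (hVQ : ∀ s, VQ s = Finset.univ.sup' Finset.univ_nonempty (Q s))
    -- `P_{V_Q}` attains the minimum of `p·V_Q` over each `U(s,a)`
    (PVQ : S → A → S → ℝ)
    (hPVQmem : ∀ s a, PVQ s a ∈ U s a)
    (hPVQmin : ∀ s a, ∀ p ∈ U s a, ∑ s', PVQ s a s' * VQ s' ≤ ∑ s', p s' * VQ s')
    -- the optimal robust Bellman equation, with the minimum attained at `P_{V_Q}`
    (hBellman : ∀ s a, Q s a = r s a - g + ∑ s', PVQ s a s' * VQ s')
    -- `a*` is a greedy policy w.r.t. `Q`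
    (astar : S → A)
    (hGreedy : ∀ s, Q s (astar s) = Finset.univ.sup' Finset.univ_nonempty (Q s)) :
    -- (i) `(g, V_Q)` solves the robust Bellman equation for the greedy policy `a*`
    (∀ s : S, VQ s = r s (astar s) - g + ∑ s', PVQ s (astar s) s' * VQ s')
    ∧
    -- (ii) `g` lower bounds every existing Cesàro-average reward of `a*`
    (∀ P : S → A → S → ℝ, (∀ s a, P s a ∈ U s a) →
      ∀ (s : S) (L : ℝ),
        Filter.Tendsto (detCesaro astar P r s) Filter.atTop (nhds L) → g ≤ L)
    ∧
    -- (iii) for `P_{V_Q}` the Cesàro limit exists everywhere and equals `g`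
    (∀ s : S, Filter.Tendsto (detCesaro astar PVQ r s) Filter.atTop (nhds g)) := by
    -- abbreviations
  set rr : S → ℝ := fun s0 => r s0 (astar s0) with hrr
  have hkey : ∀ s : S, VQ s = r s (astar s) - g + ∑ s', PVQ s (astar s) s' * VQ s' := by
    intro s
    rw [hVQ s, ← hGreedy s, hBellman]
  -- bound on VQ
  obtain ⟨M, hM⟩ : ∃ M : ℝ, ∀ s, |VQ s| ≤ M :=
    ⟨Finset.univ.sup' Finset.univ_nonempty (fun s => |VQ s|),
      fun s => Finset.le_sup' (fun s => |VQ s|) (Finset.mem_univ s)⟩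
  refine ⟨hkey, ?_, ?_⟩
  · -- (ii)
    intro P hP s L hL
    have hP0 : ∀ s0 s', 0 ≤ P s0 (astar s0) s' :=
      fun s0 s' => (hUsimplex s0 (astar s0) _ (hP s0 (astar s0))).1 s'
    have hP1 : ∀ s0, ∑ s', P s0 (astar s0) s' = 1 :=
      fun s0 => (hUsimplex s0 (astar s0) _ (hP s0 (astar s0))).2
    have hbase : ∀ s0, g + VQ s0 - detKernelStep astar P VQ s0 ≤ rr s0 := by
      intro s0
      have h1 := hkey s0
      have h2 := hPVQmin s0 (astar s0) _ (hP s0 (astar s0))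
      have h3 : detKernelStep astar P VQ s0 = ∑ s', P s0 (astar s0) s' * VQ s' := rfl
      simp only [hrr]
      linarith
    have hle := detStep_iter_le astar P rr VQ g hP0 hP1 hbase
    have hbnd := detStep_iter_bound astar P VQ M hP0 hP1 hM
    have hlow : ∀ T : ℕ, 1 ≤ T →
        g + (T : ℝ)⁻¹ * (VQ s - (detKernelStep astar P)^[T] VQ s)
          ≤ detCesaro astar P r s T := by
      intro T hT
      have hTpos : (0 : ℝ) < T := by exact_mod_cast hT
      have hsum : (T : ℝ) * g + (VQ s - (detKernelStep astar P)^[T] VQ s)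
          ≤ ∑ t ∈ Finset.range T, (detKernelStep astar P)^[t] rr s := by
        have ht := telescope_aux g (fun t => (detKernelStep astar P)^[t] VQ s) T
        simp only [Function.iterate_zero, id_eq] at ht
        rw [← ht]
        exact Finset.sum_le_sum fun t _ => hle t s
      have := mul_le_mul_of_nonneg_left hsum (le_of_lt (inv_pos.mpr hTpos))
      calc g + (T : ℝ)⁻¹ * (VQ s - (detKernelStep astar P)^[T] VQ s)
          = (T : ℝ)⁻¹ * ((T : ℝ) * g + (VQ s - (detKernelStep astar P)^[T] VQ s)) := by
            rw [mul_add, ← mul_assoc, inv_mul_cancel₀ (ne_of_gt hTpos), one_mul]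
        _ ≤ (T : ℝ)⁻¹ * ∑ t ∈ Finset.range T, (detKernelStep astar P)^[t] rr s := this
        _ = detCesaro astar P r s T := rfl
    have htend : Filter.Tendsto
        (fun T : ℕ => g + (T : ℝ)⁻¹ * (VQ s - (detKernelStep astar P)^[T] VQ s))
        Filter.atTop (nhds g) := by
      apply tendsto_cesaro_aux g _ (2 * M)
      intro T
      calc |VQ s - (detKernelStep astar P)^[T] VQ s|
          ≤ |VQ s| + |(detKernelStep astar P)^[T] VQ s| := abs_sub _ _
        _ ≤ M + M := add_le_add (hM s) (hbnd T s)
        _ = 2 * M := by ring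
    refine le_of_tendsto_of_tendsto htend hL ?_
    filter_upwards [Filter.eventually_ge_atTop 1] with T hT using hlow T hT
  · -- (iii)
    intro s
    have hP0 : ∀ s0 s', 0 ≤ PVQ s0 (astar s0) s' :=
      fun s0 s' => (hUsimplex s0 (astar s0) _ (hPVQmem s0 (astar s0))).1 s'
    have hP1 : ∀ s0, ∑ s', PVQ s0 (astar s0) s' = 1 :=
      fun s0 => (hUsimplex s0 (astar s0) _ (hPVQmem s0 (astar s0))).2
    have hbase : ∀ s0, g + VQ s0 - detKernelStep astar PVQ VQ s0 = rr s0 := by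
      intro s0
      have h1 := hkey s0
      have h3 : detKernelStep astar PVQ VQ s0 = ∑ s', PVQ s0 (astar s0) s' * VQ s' := rfl
      simp only [hrr]
      linarith
    have heq := detStep_iter_eq astar PVQ rr VQ g hP1 hbase
    have hbnd := detStep_iter_bound astar PVQ VQ M hP0 hP1 hM
    have htend : Filter.Tendsto
        (fun T : ℕ => g + (T : ℝ)⁻¹ * (VQ s - (detKernelStep astar PVQ)^[T] VQ s))
        Filter.atTop (nhds g) := by
      apply tendsto_cesaro_aux g _ (2 * M)
      intro T
      calc |VQ s - (detKernelStep astar PVQ)^[T] VQ s|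
          ≤ |VQ s| + |(detKernelStep astar PVQ)^[T] VQ s| := abs_sub _ _
        _ ≤ M + M := add_le_add (hM s) (hbnd T s)
        _ = 2 * M := by ring
    refine htend.congr' ?_
    filter_upwards [Filter.eventually_ge_atTop 1] with T hT
    have hTpos : (0 : ℝ) < T := by exact_mod_cast hT
    have hsum : ∑ t ∈ Finset.range T, (detKernelStep astar PVQ)^[t] rr s
        = (T : ℝ) * g + (VQ s - (detKernelStep astar PVQ)^[T] VQ s) := by
      have ht := telescope_aux g (fun t => (detKernelStep astar PVQ)^[t] VQ s) T
      simp only [Function.iterate_zero, id_eq] at ht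
      rw [← ht]
      exact Finset.sum_congr rfl fun t _ => (heq t s).symm
    show g + (T : ℝ)⁻¹ * (VQ s - (detKernelStep astar PVQ)^[T] VQ s)
        = detCesaro astar PVQ r s T
    rw [detCesaro, hsum, mul_add, ← mul_assoc, inv_mul_cancel₀ (ne_of_gt hTpos), one_mul]
end

section
/- ODE decomposition lemma (Lemma B, x = y + r·e). Let T V(s) := Σ_a π(a|s)·(r(s,a) + inf_{p ∈ 𝒫(s,a)} p·V) be the robust average-reward Bellman operator, where each 𝒫(s,a) ⊆ Δ(S) is nonempty, let f : (S → ℝ) → ℝ be Lipschitz in the sup norm and satisfy f(x + c·e) = f(x) + c for all x and all c ∈ ℝ, and let g ∈ ℝ (in the paper, the robust average reward g^π_𝒫). Suppose x, y : [0,∞) → (S → ℝ) are differentiable and satisfy x'(t) = T(x(t)) − f(x(t))·e − x(t) and y'(t) = T(y(t)) − g·e − y(t) for all t ≥ 0, with x(0) = y(0). Then there exists a differentiable function ρ : [0,∞) → ℝ with ρ(0) = 0 and ρ'(t) = −ρ(t) + g − f(y(t)) for all t ≥ 0, such that x(t) = y(t) + ρ(t)·e for all t ≥ 0. -/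
/-!
Both `T` and `f` commute with adding a constant vector `c • e`, so for any scalar `ρ` the curve
`y + ρ e` solves `z' = T z - f(z) e - z` as soon as `ρ' = -ρ + g - f(y)`; this scalar linear
equation with `ρ(0) = 0` is solved by variation of constants. Each `V ↦ inf_{p ∈ 𝒫} p·V` is
1-Lipschitz in the sup norm, hence so is `T`, and the vector field `V ↦ T V - f(V) e - V` is
Lipschitz. Since `x` and `y + ρ e` solve the same equation with the same initial value, they
coincide by uniqueness of solutions.
-/

open Finset Set NNReal

section WeightedAverage

variable {ι : Type*} [Fintype ι] {w : ι → ℝ}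

lemma sum_mul_add_const (hw : ∑ i, w i = 1) (u : ι → ℝ) (c : ℝ) :
    ∑ i, w i * (u i + c) = ∑ i, w i * u i + c := by
  simp only [mul_add, sum_add_distrib, ← sum_mul, hw, one_mul]

lemma abs_sum_mul_le (hw0 : ∀ i, 0 ≤ w i) (hw : ∑ i, w i = 1) {u : ι → ℝ} {C : ℝ}
    (hu : ∀ i, |u i| ≤ C) : |∑ i, w i * u i| ≤ C :=
  calc |∑ i, w i * u i| ≤ ∑ i, w i * |u i| := by
        refine (abs_sum_le_sum_abs _ _).trans_eq (sum_congr rfl fun i _ => ?_)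
        rw [abs_mul, abs_of_nonneg (hw0 i)]
    _ ≤ ∑ i, w i * C := sum_le_sum fun i _ => mul_le_mul_of_nonneg_left (hu i) (hw0 i)
    _ = C := by rw [← sum_mul, hw, one_mul]

end WeightedAverage

section RobustExpectation

variable {S : Type*} [Fintype S] {P : Set (S → ℝ)}

noncomputable def robustExpectation (P : Set (S → ℝ)) (V : S → ℝ) : ℝ :=
  sInf ((fun p => ∑ s, p s * V s) '' P)

lemma abs_sum_mul_le_norm {p : S → ℝ} (hp : (∀ s, 0 ≤ p s) ∧ ∑ s, p s = 1) (V : S → ℝ) :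
    |∑ s, p s * V s| ≤ ‖V‖ :=
  abs_sum_mul_le hp.1 hp.2 fun s => norm_le_pi_norm V s

lemma bddBelow_image_sum_mul (hP : ∀ p ∈ P, (∀ s, 0 ≤ p s) ∧ ∑ s, p s = 1) (V : S → ℝ) :
    BddBelow ((fun p => ∑ s, p s * V s) '' P) :=
  ⟨-‖V‖, forall_mem_image.2 fun p hp => neg_le_of_abs_le (abs_sum_mul_le_norm (hP p hp) V)⟩

lemma robustExpectation_le_add_norm_sub (hP : ∀ p ∈ P, (∀ s, 0 ≤ p s) ∧ ∑ s, p s = 1)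
    (hne : P.Nonempty) (V W : S → ℝ) :
    robustExpectation P V ≤ robustExpectation P W + ‖V - W‖ := by
  rw [← sub_le_iff_le_add]
  refine le_csInf (hne.image _) (forall_mem_image.2 fun p hp => sub_le_iff_le_add.2 ?_)
  calc robustExpectation P V ≤ ∑ s, p s * V s :=
        csInf_le (bddBelow_image_sum_mul hP V) (mem_image_of_mem _ hp)
    _ = ∑ s, p s * W s + ∑ s, p s * (V - W) s := by
        rw [← sum_add_distrib]; simp only [Pi.sub_apply, mul_sub, add_sub_cancel]
    _ ≤ ∑ s, p s * W s + ‖V - W‖ := by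
        grw [le_of_abs_le (abs_sum_mul_le_norm (hP p hp) (V - W))]

lemma abs_robustExpectation_sub_le (hP : ∀ p ∈ P, (∀ s, 0 ≤ p s) ∧ ∑ s, p s = 1)
    (hne : P.Nonempty) (V W : S → ℝ) :
    |robustExpectation P V - robustExpectation P W| ≤ ‖V - W‖ :=
  abs_sub_le_iff.2 ⟨by linarith [robustExpectation_le_add_norm_sub hP hne V W],
    by linarith [robustExpectation_le_add_norm_sub hP hne W V, norm_sub_rev V W]⟩

lemma robustExpectation_add_const (hP : ∀ p ∈ P, (∀ s, 0 ≤ p s) ∧ ∑ s, p s = 1)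
    (hne : P.Nonempty) (V : S → ℝ) (c : ℝ) :
    robustExpectation P (V + fun _ => c) = robustExpectation P V + c := by
  have himage : (fun p => ∑ s, p s * (V + fun _ => c : S → ℝ) s) '' P
      = (· + c) '' ((fun p => ∑ s, p s * V s) '' P) := by
    rw [Set.image_image]
    exact image_congr fun p hp => sum_mul_add_const (hP p hp).2 V c
  rw [robustExpectation, himage]
  exact ((OrderIso.addRight c).map_csInf' (hne.image _) (bddBelow_image_sum_mul hP V)).symm

end RobustExpectation

section RobustBellman

variable {S A : Type*} [Fintype S] [Fintype A] {r π : S → A → ℝ} {U : S → A → Set (S → ℝ)}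

noncomputable def robustBellman (r π : S → A → ℝ) (U : S → A → Set (S → ℝ)) (V : S → ℝ) :
    S → ℝ :=
  fun s => ∑ a, π s a * (r s a + robustExpectation (U s a) V)

lemma robustBellman_add_const (hπ : ∀ s, (∀ a, 0 ≤ π s a) ∧ ∑ a, π s a = 1)
    (hUne : ∀ s a, (U s a).Nonempty)
    (hU : ∀ s a, ∀ p ∈ U s a, (∀ s', 0 ≤ p s') ∧ ∑ s', p s' = 1) (V : S → ℝ) (c : ℝ) :
    robustBellman r π U (V + fun _ => c) = robustBellman r π U V + fun _ => c := by
  funext s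
  simp only [robustBellman, Pi.add_apply,
    fun a => robustExpectation_add_const (hU s a) (hUne s a) V c, ← add_assoc]
  exact sum_mul_add_const (hπ s).2 _ c

lemma lipschitzWith_robustBellman (hπ : ∀ s, (∀ a, 0 ≤ π s a) ∧ ∑ a, π s a = 1)
    (hUne : ∀ s a, (U s a).Nonempty)
    (hU : ∀ s a, ∀ p ∈ U s a, (∀ s', 0 ≤ p s') ∧ ∑ s', p s' = 1) :
    LipschitzWith 1 (robustBellman r π U) := by
  refine LipschitzWith.of_dist_le_mul fun V W => ?_
  rw [NNReal.coe_one, one_mul, dist_eq_norm, dist_eq_norm]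
  refine (pi_norm_le_iff_of_nonneg (norm_nonneg _)).2 fun s => ?_
  rw [Real.norm_eq_abs, Pi.sub_apply, robustBellman, robustBellman, ← sum_sub_distrib]
  simp_rw [← mul_sub, add_sub_add_left_eq_sub]
  exact abs_sum_mul_le (hπ s).1 (hπ s).2 fun a =>
    abs_robustExpectation_sub_le (hU s a) (hUne s a) V W

end RobustBellman

lemma exists_hasDerivAt_eq_neg_add {h : ℝ → ℝ} (hh : Continuous h) :
    ∃ ρ : ℝ → ℝ, ρ 0 = 0 ∧ ∀ t, HasDerivAt ρ (-ρ t + h t) t := by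
  have hI (t : ℝ) : HasDerivAt (fun t => ∫ u in (0 : ℝ)..t, Real.exp u * h u)
      (Real.exp t * h t) t :=
    ((Real.continuous_exp.mul hh).integral_hasStrictDerivAt 0 t).hasDerivAt
  refine ⟨fun t => Real.exp (-t) * ∫ u in (0 : ℝ)..t, Real.exp u * h u, by simp, fun t => ?_⟩
  refine ((hasDerivAt_neg t).exp.mul (hI t)).congr_deriv ?_
  have hexp : Real.exp (-t) * Real.exp t = 1 := by
    rw [← Real.exp_add, neg_add_cancel, Real.exp_zero]
  linear_combination h t * hexp

lemma continuous_comp_max_of_continuousAt {X : Type*} [TopologicalSpace X] {y : ℝ → X}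
    {a : ℝ} (hy : ∀ t, a ≤ t → ContinuousAt y t) : Continuous fun u => y (max u a) :=
  continuous_iff_continuousAt.2 fun u =>
    (hy _ (le_max_right u a)).comp (f := fun u => max u a)
      (continuous_id.max continuous_const).continuousAt

theorem ODE_solution_unique_Ici {E : Type*} [NormedAddCommGroup E] [NormedSpace ℝ E]
    {G : E → E} {K : ℝ≥0} (hG : LipschitzWith K G) {x z : ℝ → E} {a : ℝ}
    (hx : ∀ t, a ≤ t → HasDerivAt x (G (x t)) t) (hz : ∀ t, a ≤ t → HasDerivAt z (G (z t)) t)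
    (ha : x a = z a) : EqOn x z (Ici a) := fun _ ht =>
  ODE_solution_unique (v := fun _ => G) (fun _ => hG)
    (fun u hu => (hx u hu.1).continuousAt.continuousWithinAt)
    (fun u hu => (hx u hu.1).hasDerivWithinAt)
    (fun u hu => (hz u hu.1).continuousAt.continuousWithinAt)
    (fun u hu => (hz u hu.1).hasDerivWithinAt) ha ⟨ht, le_rfl⟩

lemma hasDerivAt_add_const_of_shift_equivariant {S : Type*} [Fintype S] {T : (S → ℝ) → S → ℝ}
    {f : (S → ℝ) → ℝ} (hT : ∀ V c, T (V + fun _ => c) = T V + fun _ => c)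
    (hf : ∀ V c, f (V + fun _ => c) = f V + c) {y : ℝ → S → ℝ} {ρ : ℝ → ℝ} {g t : ℝ}
    (hy : HasDerivAt y (T (y t) - (fun _ => g) - y t) t)
    (hρ : HasDerivAt ρ (-ρ t + g - f (y t)) t) :
    HasDerivAt (fun t => y t + fun _ => ρ t)
      (T (y t + fun _ => ρ t) - (fun _ => f (y t + fun _ => ρ t)) - (y t + fun _ => ρ t)) t := by
  rw [hT, hf]
  refine (hy.add (hasDerivAt_pi.2 fun _ => hρ)).congr_deriv (funext fun s => ?_)
  simp only [Pi.add_apply, Pi.sub_apply]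
  ring

theorem ode_decomposition_general
    {S A : Type*} [Fintype S] [Fintype A]
    (r : S → A → ℝ) (π : S → A → ℝ)
    (hπ : ∀ s, (∀ a, 0 ≤ π s a) ∧ ∑ a, π s a = 1)
    (U : S → A → Set (S → ℝ))
    (hUne : ∀ s a, (U s a).Nonempty)
    (hUsimplex : ∀ s a, ∀ p ∈ U s a, (∀ s', 0 ≤ p s') ∧ ∑ s', p s' = 1)
    -- the robust average-reward Bellman operator
    (T : (S → ℝ) → (S → ℝ))
    (hT : ∀ (V : S → ℝ) (s : S),
      T V s = ∑ a, π s a * (r s a + sInf {x : ℝ | ∃ p ∈ U s a, x = ∑ s', p s' * V s'}))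
    (f : (S → ℝ) → ℝ) (Lf : ℝ)
    (hfLip : ∀ V₁ V₂ : S → ℝ, |f V₁ - f V₂| ≤ Lf * ‖V₁ - V₂‖)
    (hfshift : ∀ (V : S → ℝ) (c : ℝ), f (V + fun _ => c) = f V + c)
    (g : ℝ)
    (x y : ℝ → S → ℝ)
    (hx : ∀ t : ℝ, 0 ≤ t → HasDerivAt x (T (x t) - (fun _ => f (x t)) - x t) t)
    (hy : ∀ t : ℝ, 0 ≤ t → HasDerivAt y (T (y t) - (fun _ => g) - y t) t)
    (hxy0 : x 0 = y 0) :
    ∃ ρ : ℝ → ℝ, ρ 0 = 0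
      ∧ (∀ t : ℝ, 0 ≤ t → HasDerivAt ρ (-ρ t + g - f (y t)) t)
      ∧ (∀ t : ℝ, 0 ≤ t → x t = y t + fun _ => ρ t) := by
  obtain rfl : T = robustBellman r π U := by
    ext V s
    simp only [hT, robustBellman, robustExpectation, Set.image, eq_comm]
  have hf : LipschitzWith (Real.toNNReal Lf) f :=
    .of_dist_le' fun V W => by rw [Real.dist_eq, dist_eq_norm]; exact hfLip V W
  have hconst : LipschitzWith 1 fun c : ℝ => fun _ : S => c := .mk_one dist_pi_const_le
  have hG : LipschitzWith _ fun V => robustBellman r π U V - (fun _ => f V) - V :=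
    ((lipschitzWith_robustBellman (r := r) hπ hUne hUsimplex).sub (hconst.comp hf)).sub .id
  -- `y` is only known on `[0, ∞)`; freezing it for negative times keeps the forcing term
  -- continuous on `ℝ`, which gives a two-sided derivative of `ρ` at `0`.
  obtain ⟨ρ, hρ0, hρ⟩ := exists_hasDerivAt_eq_neg_add (h := fun u => g - f (y (max u 0)))
    (continuous_const.sub (hf.continuous.comp
      (continuous_comp_max_of_continuousAt fun t ht => (hy t ht).continuousAt)))
  have hρy (t : ℝ) (ht : 0 ≤ t) : HasDerivAt ρ (-ρ t + g - f (y t)) t := by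
    simpa only [max_eq_left ht, add_sub_assoc] using hρ t
  refine ⟨ρ, hρ0, hρy, fun t ht => ODE_solution_unique_Ici hG hx (fun t ht =>
    hasDerivAt_add_const_of_shift_equivariant (robustBellman_add_const hπ hUne hUsimplex)
      hfshift (hy t ht) (hρy t ht)) ?_ ht⟩
  simp [hxy0, hρ0, Pi.zero_def]

theorem ode_decomposition
    {S A : Type*} [Fintype S] [Nonempty S] [Fintype A] [Nonempty A]
    (r : S → A → ℝ) (π : S → A → ℝ)
    (hπ : ∀ s, (∀ a, 0 ≤ π s a) ∧ ∑ a, π s a = 1)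
    (U : S → A → Set (S → ℝ))
    (hUne : ∀ s a, (U s a).Nonempty)
    (hUsimplex : ∀ s a, ∀ p ∈ U s a, (∀ s', 0 ≤ p s') ∧ ∑ s', p s' = 1)
    -- the robust average-reward Bellman operator
    (T : (S → ℝ) → (S → ℝ))
    (hT : ∀ (V : S → ℝ) (s : S),
      T V s = ∑ a, π s a * (r s a + sInf {x : ℝ | ∃ p ∈ U s a, x = ∑ s', p s' * V s'}))
    (f : (S → ℝ) → ℝ) (Lf : ℝ)
    (hfLip : ∀ V₁ V₂ : S → ℝ, |f V₁ - f V₂| ≤ Lf * ‖V₁ - V₂‖)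
    (hfshift : ∀ (V : S → ℝ) (c : ℝ), f (V + fun _ => c) = f V + c)
    (g : ℝ)
    (x y : ℝ → S → ℝ)
    (hx : ∀ t : ℝ, 0 ≤ t → HasDerivAt x (T (x t) - (fun _ => f (x t)) - x t) t)
    (hy : ∀ t : ℝ, 0 ≤ t → HasDerivAt y (T (y t) - (fun _ => g) - y t) t)
    (hxy0 : x 0 = y 0) :
    ∃ ρ : ℝ → ℝ, ρ 0 = 0
      ∧ (∀ t : ℝ, 0 ≤ t → HasDerivAt ρ (-ρ t + g - f (y t)) t)
      ∧ (∀ t : ℝ, 0 ≤ t → x t = y t + fun _ => ρ t) :=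
  ode_decomposition_general r π hπ U hUne hUsimplex T hT f Lf hfLip hfshift g x y hx hy hxy0
end

section
/- Lemma F.5 (boundedness of the chi-square dual). Let p ∈ Δ(S), δ > 0, V : S → ℝ, and define g(μ) := p·(V − μ) − √(δ·Var_p(V − μ)) for μ : S → ℝ, where Var_p(X) := Σ_s p(s)·X(s)² − (Σ_s p(s)·X(s))². Then: (i) sup over all μ ≥ 0 (componentwise) of g(μ) equals the supremum of g(μ) over the compact box {μ : 0 ≤ μ ≤ V + ‖V‖·e} (in particular the supremum over μ ≥ 0 is attained at some μ* in this box, which satisfies ‖μ*‖ ≤ 2‖V‖); and (ii) |sup_{μ ≥ 0} g(μ)| ≤ 3(1 + √(2δ))·‖V‖. -/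
/-- Variance of `X` under the distribution `p`: `Var_p(X) = Σ p X² − (Σ p X)²`. -/
noncomputable def varDist {S : Type*} [Fintype S] (p X : S → ℝ) : ℝ :=
  ∑ s, p s * X s ^ 2 - (∑ s, p s * X s) ^ 2

lemma var_double_sum {S : Type*} [Fintype S] (p X : S → ℝ) (hsum : ∑ s, p s = 1) :
    varDist p X = (1/2) * ∑ s, ∑ t, p s * p t * (X s - X t)^2 := by
  have hrow : ∀ s : S, ∑ t, p s * p t * (X s - X t)^2
      = p s * X s ^ 2 - 2 * (p s * X s) * (∑ t, p t * X t) + p s * (∑ t, p t * X t ^ 2) := by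
    intro s
    have h : ∀ t : S, p s * p t * (X s - X t)^2
        = (p s * X s ^ 2) * p t - (2 * (p s * X s)) * (p t * X t) + p s * (p t * X t ^ 2) := by
      intro t; ring
    rw [Finset.sum_congr rfl (fun t _ => h t)]
    rw [Finset.sum_add_distrib, Finset.sum_sub_distrib, ← Finset.mul_sum, ← Finset.mul_sum,
      ← Finset.mul_sum, hsum]
    ring
  rw [Finset.sum_congr rfl (fun s _ => hrow s)]
  rw [Finset.sum_add_distrib, Finset.sum_sub_distrib, ← Finset.sum_mul, ← Finset.sum_mul]
  have h2 : ∑ s, 2 * (p s * X s) = 2 * ∑ s, p s * X s := by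
    rw [Finset.mul_sum]
  rw [h2, hsum, varDist]
  ring

theorem chi_square_dual_bounded
    {S : Type*} [Fintype S] [Nonempty S]
    (p : S → ℝ) (hp : (∀ s, 0 ≤ p s) ∧ ∑ s, p s = 1)
    (δ : ℝ) (hδ : 0 < δ) (V : S → ℝ)
    (g : (S → ℝ) → ℝ)
    (hg : ∀ μ : S → ℝ,
      g μ = (∑ s, p s * (V s - μ s))
              - Real.sqrt (δ * varDist p (fun s => V s - μ s))) :
    -- (i) the sup over μ ≥ 0 equals the sup over the compact box, and is attained there
    (sSup {x : ℝ | ∃ μ : S → ℝ, (∀ s, 0 ≤ μ s) ∧ x = g μ}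
      = sSup {x : ℝ | ∃ μ : S → ℝ, (∀ s, 0 ≤ μ s ∧ μ s ≤ V s + ‖V‖) ∧ x = g μ})
    ∧
    (∃ μstar : S → ℝ, (∀ s, 0 ≤ μstar s ∧ μstar s ≤ V s + ‖V‖)
      ∧ g μstar = sSup {x : ℝ | ∃ μ : S → ℝ, (∀ s, 0 ≤ μ s) ∧ x = g μ}
      ∧ ‖μstar‖ ≤ 2 * ‖V‖)
    ∧
    -- (ii) bound on the optimal value
    |sSup {x : ℝ | ∃ μ : S → ℝ, (∀ s, 0 ≤ μ s) ∧ x = g μ}|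
      ≤ 3 * (1 + Real.sqrt (2 * δ)) * ‖V‖ := by
  obtain ⟨hp0, hp1⟩ := hp
  set A := {x : ℝ | ∃ μ : S → ℝ, (∀ s, 0 ≤ μ s) ∧ x = g μ} with hA
  set B := {x : ℝ | ∃ μ : S → ℝ, (∀ s, 0 ≤ μ s ∧ μ s ≤ V s + ‖V‖) ∧ x = g μ} with hB
  have hVabs : ∀ s, |V s| ≤ ‖V‖ := by
    intro s
    have := norm_le_pi_norm V s
    simpa [Real.norm_eq_abs] using this
  have hbox0 : ∀ s, 0 ≤ V s + ‖V‖ := by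
    intro s; have := (abs_le.1 (hVabs s)).1; linarith
  -- continuity of g
  have hgfun : g = fun μ : S → ℝ => (∑ s, p s * (V s - μ s))
      - Real.sqrt (δ * (∑ s, p s * (V s - μ s) ^ 2 - (∑ s, p s * (V s - μ s)) ^ 2)) := by
    funext μ; rw [hg μ]; rfl
  have hcont : Continuous g := by
    rw [hgfun]
    apply Continuous.sub
    · exact continuous_finset_sum _ (fun s _ => by
        exact (continuous_const.mul (continuous_const.sub (continuous_apply s))))
    · apply Real.continuous_sqrt.comp
      apply Continuous.mul continuous_const
      apply Continuous.sub
      · exact continuous_finset_sum _ (fun s _ => by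
          exact (continuous_const.mul ((continuous_const.sub (continuous_apply s)).pow 2)))
      · exact (continuous_finset_sum _ (fun s _ => by
          exact (continuous_const.mul (continuous_const.sub (continuous_apply s))))).pow 2
  -- the compact box
  set K : Set (S → ℝ) := Set.univ.pi (fun s => Set.Icc 0 (V s + ‖V‖)) with hKdef
  have hKcompact : IsCompact K := isCompact_univ_pi (fun s => isCompact_Icc)
  have hKne : K.Nonempty := ⟨fun _ => 0, fun s _ => ⟨le_refl 0, hbox0 s⟩⟩
  obtain ⟨μstar, hμstarK, hmax⟩ := hKcompact.exists_isMaxOn hKne hcont.continuousOn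
  have hμstar : ∀ s, 0 ≤ μstar s ∧ μstar s ≤ V s + ‖V‖ := by
    intro s; exact hμstarK s (Set.mem_univ s)
  -- key: clamping does not decrease g
  have key : ∀ μ : S → ℝ, (∀ s, 0 ≤ μ s) → g μ ≤ g μstar := by
    intro μ hμ
    set μ' : S → ℝ := fun s => min (μ s) (V s + ‖V‖) with hμ'def
    have hμ'K : μ' ∈ K := by
      intro s _
      exact ⟨le_min (hμ s) (hbox0 s), min_le_right _ _⟩
    have hform : ∀ s, V s - μ' s = max (V s - μ s) (-‖V‖) := by
      intro s
      rcases le_total (μ s) (V s + ‖V‖) with h | h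
      · rw [show μ' s = μ s from min_eq_left h, max_eq_left (by linarith)]
      · rw [show μ' s = V s + ‖V‖ from min_eq_right h, max_eq_right (by linarith)]
        ring
    have hsum : (∑ s, p s * (V s - μ s)) ≤ ∑ s, p s * (V s - μ' s) := by
      apply Finset.sum_le_sum
      intro s _
      apply mul_le_mul_of_nonneg_left _ (hp0 s)
      have : μ' s ≤ μ s := min_le_left _ _
      linarith
    have hvar : varDist p (fun s => V s - μ' s) ≤ varDist p (fun s => V s - μ s) := by
      rw [var_double_sum p _ hp1, var_double_sum p _ hp1]
      have : (∑ s, ∑ t, p s * p t * ((V s - μ' s) - (V t - μ' t))^2)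
          ≤ ∑ s, ∑ t, p s * p t * ((V s - μ s) - (V t - μ t))^2 := by
        apply Finset.sum_le_sum; intro s _
        apply Finset.sum_le_sum; intro t _
        apply mul_le_mul_of_nonneg_left _ (mul_nonneg (hp0 s) (hp0 t))
        rw [hform s, hform t]
        have habs : |max (V s - μ s) (-‖V‖) - max (V t - μ t) (-‖V‖)|
            ≤ |(V s - μ s) - (V t - μ t)| := by
          exact abs_max_sub_max_le_abs _ _ _
        calc (max (V s - μ s) (-‖V‖) - max (V t - μ t) (-‖V‖))^2
            = |max (V s - μ s) (-‖V‖) - max (V t - μ t) (-‖V‖)|^2 := (sq_abs _).symm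
          _ ≤ |(V s - μ s) - (V t - μ t)|^2 := by
              apply pow_le_pow_left₀ (abs_nonneg _) habs
          _ = ((V s - μ s) - (V t - μ t))^2 := sq_abs _
      linarith
    have hsqrt : Real.sqrt (δ * varDist p (fun s => V s - μ' s))
        ≤ Real.sqrt (δ * varDist p (fun s => V s - μ s)) :=
      Real.sqrt_le_sqrt (mul_le_mul_of_nonneg_left hvar hδ.le)
    have h1 : g μ ≤ g μ' := by
      rw [hg μ, hg μ']; linarith
    exact h1.trans (hmax hμ'K)
  -- memberships and suprema
  have hstarB : g μstar ∈ B := ⟨μstar, hμstar, rfl⟩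
  have hBA : B ⊆ A := by
    rintro x ⟨μ, hμ, hx⟩
    exact ⟨μ, fun s => (hμ s).1, hx⟩
  have hstarA : g μstar ∈ A := hBA hstarB
  have hAub : ∀ x ∈ A, x ≤ g μstar := by
    rintro x ⟨μ, hμ, rfl⟩
    exact key μ hμ
  have hsupA : sSup A = g μstar :=
    le_antisymm (csSup_le ⟨_, hstarA⟩ hAub)
      (le_csSup ⟨g μstar, hAub⟩ hstarA)
  have hsupB : sSup B = g μstar :=
    le_antisymm (csSup_le ⟨_, hstarB⟩ (fun x hx => hAub x (hBA hx)))
      (le_csSup ⟨g μstar, fun x hx => hAub x (hBA hx)⟩ hstarB)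
  refine ⟨by rw [hsupA, hsupB], ⟨μstar, hμstar, hsupA.symm, ?_⟩, ?_⟩
  · -- norm bound on μstar
    apply pi_norm_le_iff_of_nonneg (by positivity) |>.2
    intro s
    rw [Real.norm_eq_abs, abs_of_nonneg (hμstar s).1]
    have := (abs_le.1 (hVabs s)).2
    have := (hμstar s).2
    linarith
  · -- (ii)
    rw [hsupA]
    have hsqrt2δ : 0 ≤ Real.sqrt (2 * δ) := Real.sqrt_nonneg _
    have hVn : 0 ≤ ‖V‖ := norm_nonneg _
    rw [abs_le]
    constructor
    · -- lower bound: g μstar ≥ g 0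
      have h0 : g (fun _ => 0) ≤ g μstar := key _ (fun _ => le_refl 0)
      have hg0 : g (fun _ => 0) = (∑ s, p s * V s)
          - Real.sqrt (δ * varDist p V) := by
        rw [hg]; simp
      have hsumV : -‖V‖ ≤ ∑ s, p s * V s := by
        calc -‖V‖ = ∑ s, p s * (-‖V‖) := by rw [← Finset.sum_mul, hp1]; ring
          _ ≤ ∑ s, p s * V s := by
            apply Finset.sum_le_sum; intro s _
            apply mul_le_mul_of_nonneg_left _ (hp0 s)
            exact (abs_le.1 (hVabs s)).1
      have hvarV : varDist p V ≤ ‖V‖^2 := by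
        rw [varDist]
        have h1 : ∑ s, p s * V s ^ 2 ≤ ‖V‖^2 := by
          calc ∑ s, p s * V s ^ 2 ≤ ∑ s, p s * ‖V‖^2 := by
                apply Finset.sum_le_sum; intro s _
                apply mul_le_mul_of_nonneg_left _ (hp0 s)
                rw [← sq_abs (V s)]
                exact pow_le_pow_left₀ (abs_nonneg _) (hVabs s) 2
            _ = ‖V‖^2 := by rw [← Finset.sum_mul, hp1]; ring
        nlinarith [sq_nonneg (∑ s, p s * V s)]
      have hsq : Real.sqrt (δ * varDist p V) ≤ Real.sqrt (2 * δ) * ‖V‖ := by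
        calc Real.sqrt (δ * varDist p V) ≤ Real.sqrt (2 * δ * ‖V‖^2) := by
              apply Real.sqrt_le_sqrt; nlinarith
          _ = Real.sqrt (2 * δ) * ‖V‖ := by
              rw [Real.sqrt_mul (by linarith), Real.sqrt_sq hVn]
      nlinarith
    · -- upper bound
      rw [hg μstar]
      have hsum : ∑ s, p s * (V s - μstar s) ≤ ‖V‖ := by
        calc ∑ s, p s * (V s - μstar s) ≤ ∑ s, p s * ‖V‖ := by
              apply Finset.sum_le_sum; intro s _
              apply mul_le_mul_of_nonneg_left _ (hp0 s)
              have := (abs_le.1 (hVabs s)).2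
              have := (hμstar s).1
              linarith
          _ = ‖V‖ := by rw [← Finset.sum_mul, hp1]; ring
      have := Real.sqrt_nonneg (δ * varDist p (fun s => V s - μstar s))
      nlinarith
end

section
/- Lemma F.6 (boundedness of the Wasserstein dual). Let (S,d) be a nonempty finite metric space, l ≥ 1, δ > 0, p ∈ Δ(S), V : S → ℝ, and define g(λ) := −λ·δ^l + Σ_x p(x)·min_{y ∈ S}(V(y) + λ·d(x,y)^l) for λ ≥ 0. Then: (i) sup_{λ ≥ 0} g(λ) = sup_{0 ≤ λ ≤ 2‖V‖/δ^l} g(λ) (in particular the supremum over λ ≥ 0 is attained at some λ* with λ* ≤ 2‖V‖/δ^l); and (ii) |sup_{λ ≥ 0} g(λ)| ≤ ‖V‖. -/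
/-!
The inner minimum is at most `V x` (take `y = x`) and at least `-‖V‖` (the transport cost
is nonnegative), so `-‖V‖ ≤ g 0` and `g λ ≤ ‖V‖ - λ δ^l`. Beyond `λ = 2‖V‖/δ^l` the second
bound drops below the first, so `g` there is beaten by `g 0`; the continuous `g` attains its
maximum on the compact interval `[0, 2‖V‖/δ^l]`, and that maximum is the supremum over all
`λ ≥ 0`.
-/

open Set Finset

theorem exists_mem_Icc_isGreatest_image_Ici {g : ℝ → ℝ} {a b : ℝ} (hab : a ≤ b)
    (hg : ContinuousOn g (Icc a b)) (htail : ∀ x, b < x → g x ≤ g a) :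
    ∃ c ∈ Icc a b, IsGreatest (g '' Ici a) (g c) := by
  obtain ⟨c, hc, hmax⟩ := isCompact_Icc.exists_isMaxOn (nonempty_Icc.2 hab) hg
  refine ⟨c, hc, mem_image_of_mem g hc.1, ?_⟩
  rintro _ ⟨x, hx, rfl⟩
  rcases le_or_gt x b with hxb | hbx
  · exact hmax ⟨hx, hxb⟩
  · exact (htail x hbx).trans (hmax (left_mem_Icc.2 hab))

section WeightedAverage

variable {ι : Type*} [Fintype ι] {p f : ι → ℝ} {c : ℝ}

theorem sum_mul_le_of_forall_le (hp0 : ∀ i, 0 ≤ p i) (hp1 : ∑ i, p i = 1)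
    (hf : ∀ i, f i ≤ c) : ∑ i, p i * f i ≤ c :=
  calc ∑ i, p i * f i ≤ ∑ i, p i * c :=
        sum_le_sum fun i _ => mul_le_mul_of_nonneg_left (hf i) (hp0 i)
    _ = c := by rw [← sum_mul, hp1, one_mul]

theorem le_sum_mul_of_forall_le (hp0 : ∀ i, 0 ≤ p i) (hp1 : ∑ i, p i = 1)
    (hf : ∀ i, c ≤ f i) : c ≤ ∑ i, p i * f i :=
  calc c = ∑ i, p i * c := by rw [← sum_mul, hp1, one_mul]
    _ ≤ ∑ i, p i * f i := sum_le_sum fun i _ => mul_le_mul_of_nonneg_left (hf i) (hp0 i)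

end WeightedAverage

section TransportInf

variable {S : Type*} [Fintype S] [Nonempty S] [PseudoMetricSpace S] (V : S → ℝ) {l : ℝ}

theorem inf'_add_mul_dist_rpow_le (hl : l ≠ 0) (lam : ℝ) (x : S) :
    univ.inf' univ_nonempty (fun y => V y + lam * dist x y ^ l) ≤ V x := by
  simpa only [dist_self, Real.zero_rpow hl, mul_zero, add_zero]
    using inf'_le (fun y => V y + lam * dist x y ^ l) (mem_univ x)

theorem neg_norm_le_inf'_add_mul_dist_rpow {lam : ℝ} (hlam : 0 ≤ lam) (x : S) :
    -‖V‖ ≤ univ.inf' univ_nonempty (fun y => V y + lam * dist x y ^ l) :=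
  le_inf' _ _ fun y _ => le_add_of_le_of_nonneg
    (neg_le_of_abs_le (norm_le_pi_norm V y)) (mul_nonneg hlam (Real.rpow_nonneg dist_nonneg l))

theorem continuous_inf'_add_mul_dist_rpow (x : S) :
    Continuous fun lam : ℝ => univ.inf' univ_nonempty (fun y => V y + lam * dist x y ^ l) :=
  Continuous.finset_inf'_apply univ_nonempty fun y _ => by fun_prop

end TransportInf

theorem wasserstein_dual_bounded
    {S : Type*} [Fintype S] [Nonempty S] [MetricSpace S]
    (l : ℝ) (hl : 1 ≤ l) (δ : ℝ) (hδ : 0 < δ)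
    (p : S → ℝ) (hp : (∀ s, 0 ≤ p s) ∧ ∑ s, p s = 1)
    (V : S → ℝ)
    (g : ℝ → ℝ)
    (hg : ∀ lam : ℝ,
      g lam = -lam * δ ^ l
        + ∑ x, p x * Finset.univ.inf' Finset.univ_nonempty
            (fun y => V y + lam * dist x y ^ l)) :
    -- (i) the sup over λ ≥ 0 equals the sup over the compact interval, and is attained there
    (sSup {x : ℝ | ∃ lam : ℝ, 0 ≤ lam ∧ x = g lam}
      = sSup {x : ℝ | ∃ lam : ℝ, (0 ≤ lam ∧ lam ≤ 2 * ‖V‖ / δ ^ l) ∧ x = g lam})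
    ∧
    (∃ lamstar : ℝ, 0 ≤ lamstar ∧ lamstar ≤ 2 * ‖V‖ / δ ^ l
      ∧ g lamstar = sSup {x : ℝ | ∃ lam : ℝ, 0 ≤ lam ∧ x = g lam})
    ∧
    -- (ii) bound on the optimal value
    |sSup {x : ℝ | ∃ lam : ℝ, 0 ≤ lam ∧ x = g lam}| ≤ ‖V‖ := by
  obtain ⟨hp0, hp1⟩ := hp
  have hδl : 0 < δ ^ l := Real.rpow_pos_of_pos hδ l
  have hg_le (lam : ℝ) : g lam ≤ -lam * δ ^ l + ‖V‖ := by
    rw [hg]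
    gcongr
    refine sum_mul_le_of_forall_le hp0 hp1 fun x => ?_
    exact (inf'_add_mul_dist_rpow_le V (by positivity) lam x).trans
      (le_of_abs_le (norm_le_pi_norm V x))
  have hg_zero : -‖V‖ ≤ g 0 := by
    rw [hg, neg_zero, zero_mul, zero_add]
    exact le_sum_mul_of_forall_le hp0 hp1 (neg_norm_le_inf'_add_mul_dist_rpow V le_rfl)
  have hg_cont : Continuous g := by
    rw [funext hg]
    have := continuous_inf'_add_mul_dist_rpow V (l := l)
    fun_prop
  have htail (lam : ℝ) (hlam : 2 * ‖V‖ / δ ^ l < lam) : g lam ≤ g 0 := by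
    have : 2 * ‖V‖ < lam * δ ^ l := (div_lt_iff₀ hδl).1 hlam
    linarith [hg_le lam]
  obtain ⟨c, ⟨hc0, hcB⟩, hmax⟩ :=
    exists_mem_Icc_isGreatest_image_Ici (by positivity) hg_cont.continuousOn htail
  have hA : {x : ℝ | ∃ lam : ℝ, 0 ≤ lam ∧ x = g lam} = g '' Ici 0 := by
    ext; simp [eq_comm]
  have hK : {x : ℝ | ∃ lam : ℝ, (0 ≤ lam ∧ lam ≤ 2 * ‖V‖ / δ ^ l) ∧ x = g lam}
      = g '' Icc 0 (2 * ‖V‖ / δ ^ l) := by ext; simp [eq_comm]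
  have hmaxK : IsGreatest (g '' Icc 0 (2 * ‖V‖ / δ ^ l)) (g c) :=
    ⟨mem_image_of_mem g ⟨hc0, hcB⟩,
      upperBounds_mono_set (image_mono Set.Icc_subset_Ici_self) hmax.2⟩
  rw [hA, hK, hmax.csSup_eq, hmaxK.csSup_eq, abs_le]
  exact ⟨rfl, ⟨c, hc0, hcB, rfl⟩, hg_zero.trans (hmax.2 (mem_image_of_mem g self_mem_Ici)),
    by linarith [hg_le c, mul_nonneg hc0 hδl.le]⟩
end

section
/- Perturbation bound for the total-variation dual value (step in the proof that the multi-level Monte-Carlo estimator for the total-variation uncertainty set is unbiased): for any p, q ∈ Δ(S), any δ > 0 and any V : S → ℝ, |sup_{0 ≤ μ ≤ V + ‖V‖e}(p·(V − μ) − δ·Span(V − μ)) − sup_{0 ≤ μ ≤ V + ‖V‖e}(q·(V − μ) − δ·Span(V − μ))| ≤ 3‖V‖·‖p − q‖₁. -/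
/-- The span semi-norm: `Span(x) = max x − min x`. -/
noncomputable def span {T : Type*} [Fintype T] [Nonempty T] (x : T → ℝ) : ℝ :=
  Finset.univ.sup' Finset.univ_nonempty x - Finset.univ.inf' Finset.univ_nonempty x

lemma span_nonneg {T : Type*} [Fintype T] [Nonempty T] (x : T → ℝ) : 0 ≤ span x := by
  obtain ⟨t⟩ := ‹Nonempty T›
  have h1 : Finset.univ.inf' Finset.univ_nonempty x ≤ x t := Finset.inf'_le _ (Finset.mem_univ t)
  have h2 : x t ≤ Finset.univ.sup' Finset.univ_nonempty x := Finset.le_sup' _ (Finset.mem_univ t)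
  unfold span; linarith

lemma tv_aux {S : Type*} [Fintype S] [Nonempty S]
    (p q : S → ℝ)
    (hp1 : ∀ s, 0 ≤ p s) (hp2 : ∑ s, p s = 1)
    (hq1 : ∀ s, 0 ≤ q s) (hq2 : ∑ s, q s = 1)
    (δ : ℝ) (hδ : 0 < δ) (V : S → ℝ) :
    sSup {x : ℝ | ∃ μ : S → ℝ, (∀ s, 0 ≤ μ s ∧ μ s ≤ V s + ‖V‖) ∧
        x = (∑ s, p s * (V s - μ s)) - δ * span (fun s => V s - μ s)}
      ≤ sSup {x : ℝ | ∃ μ : S → ℝ, (∀ s, 0 ≤ μ s ∧ μ s ≤ V s + ‖V‖) ∧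
        x = (∑ s, q s * (V s - μ s)) - δ * span (fun s => V s - μ s)}
        + ‖V‖ * ∑ s, |p s - q s| := by
  have habs : ∀ (μ : S → ℝ), (∀ s, 0 ≤ μ s ∧ μ s ≤ V s + ‖V‖) → ∀ s, |V s - μ s| ≤ ‖V‖ := by
    intro μ hμ s
    have h1 := (hμ s).1
    have h2 := (hμ s).2
    have h3 : |V s| ≤ ‖V‖ := by simpa using norm_le_pi_norm V s
    rw [abs_le] at h3 ⊢
    constructor <;> linarith
  have hfeas : ∀ s, (0:ℝ) ≤ V s + ‖V‖ ∧ V s + ‖V‖ ≤ V s + ‖V‖ := by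
    intro s
    have : |V s| ≤ ‖V‖ := by simpa using norm_le_pi_norm V s
    rw [abs_le] at this
    exact ⟨by linarith [this.1], le_refl _⟩
  have hBdd : BddAbove {x : ℝ | ∃ μ : S → ℝ, (∀ s, 0 ≤ μ s ∧ μ s ≤ V s + ‖V‖) ∧
        x = (∑ s, q s * (V s - μ s)) - δ * span (fun s => V s - μ s)} := by
    refine ⟨‖V‖, ?_⟩
    rintro x ⟨μ, hμ, rfl⟩
    have hsum : ∑ s, q s * (V s - μ s) ≤ ∑ s, q s * ‖V‖ := by
      apply Finset.sum_le_sum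
      intro s _
      exact mul_le_mul_of_nonneg_left ((abs_le.mp (habs μ hμ s)).2) (hq1 s)
    have hone : ∑ s, q s * ‖V‖ = ‖V‖ := by rw [← Finset.sum_mul, hq2, one_mul]
    have hspan := span_nonneg (fun s => V s - μ s)
    nlinarith
  have hAne : {x : ℝ | ∃ μ : S → ℝ, (∀ s, 0 ≤ μ s ∧ μ s ≤ V s + ‖V‖) ∧
        x = (∑ s, p s * (V s - μ s)) - δ * span (fun s => V s - μ s)}.Nonempty :=
    ⟨_, fun s => V s + ‖V‖, hfeas, rfl⟩
  apply csSup_le hAne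
  rintro x ⟨μ, hμ, rfl⟩
  have hmem : (∑ s, q s * (V s - μ s)) - δ * span (fun s => V s - μ s) ∈
      {x : ℝ | ∃ μ : S → ℝ, (∀ s, 0 ≤ μ s ∧ μ s ≤ V s + ‖V‖) ∧
      x = (∑ s, q s * (V s - μ s)) - δ * span (fun s => V s - μ s)} := ⟨μ, hμ, rfl⟩
  have hle := le_csSup hBdd hmem
  have hdiff : ∑ s, p s * (V s - μ s) - ∑ s, q s * (V s - μ s) ≤ ‖V‖ * ∑ s, |p s - q s| := by
    rw [← Finset.sum_sub_distrib]
    calc ∑ s, (p s * (V s - μ s) - q s * (V s - μ s))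
        ≤ ∑ s, |p s - q s| * ‖V‖ := by
          apply Finset.sum_le_sum
          intro s _
          have h : p s * (V s - μ s) - q s * (V s - μ s) = (p s - q s) * (V s - μ s) := by ring
          rw [h]
          calc (p s - q s) * (V s - μ s) ≤ |(p s - q s) * (V s - μ s)| := le_abs_self _
            _ = |p s - q s| * |V s - μ s| := abs_mul _ _
            _ ≤ |p s - q s| * ‖V‖ := mul_le_mul_of_nonneg_left (habs μ hμ s) (abs_nonneg _)
      _ = ‖V‖ * ∑ s, |p s - q s| := by rw [← Finset.sum_mul]; ring
  linarith

theorem total_variation_dual_perturbation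
    {S : Type*} [Fintype S] [Nonempty S]
    (p q : S → ℝ)
    (hp : (∀ s, 0 ≤ p s) ∧ ∑ s, p s = 1)
    (hq : (∀ s, 0 ≤ q s) ∧ ∑ s, q s = 1)
    (δ : ℝ) (hδ : 0 < δ) (V : S → ℝ) :
    |sSup {x : ℝ | ∃ μ : S → ℝ, (∀ s, 0 ≤ μ s ∧ μ s ≤ V s + ‖V‖) ∧
        x = (∑ s, p s * (V s - μ s)) - δ * span (fun s => V s - μ s)}
      - sSup {x : ℝ | ∃ μ : S → ℝ, (∀ s, 0 ≤ μ s ∧ μ s ≤ V s + ‖V‖) ∧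
        x = (∑ s, q s * (V s - μ s)) - δ * span (fun s => V s - μ s)}|
      ≤ 3 * ‖V‖ * ∑ s, |p s - q s| := by
  have h1 := tv_aux p q hp.1 hp.2 hq.1 hq.2 δ hδ V
  have h2 := tv_aux q p hq.1 hq.2 hp.1 hp.2 δ hδ V
  have hsym : ∑ s, |q s - p s| = ∑ s, |p s - q s| := by
    apply Finset.sum_congr rfl; intro s _; rw [abs_sub_comm]
  rw [hsym] at h2
  have hnn : 0 ≤ ‖V‖ * ∑ s, |p s - q s| :=
    mul_nonneg (norm_nonneg _) (Finset.sum_nonneg fun s _ => abs_nonneg _)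
  rw [abs_le]
  constructor <;> nlinarith
end

section
/- Perturbation bound for the chi-square dual value (step in the proof that the multi-level Monte-Carlo estimator for the chi-square uncertainty set is unbiased): for any p, q ∈ Δ(S), any δ > 0 and any V : S → ℝ, |sup_{0 ≤ μ ≤ V + ‖V‖e}(p·(V − μ) − √(δ·Var_p(V − μ))) − sup_{0 ≤ μ ≤ V + ‖V‖e}(q·(V − μ) − √(δ·Var_q(V − μ)))| ≤ 3‖V‖·‖p − q‖₁ + 3‖V‖·√(3δ·‖p − q‖₁). -/
lemma sqrt_sub_le_sqrt_abs (x y : ℝ) : Real.sqrt x - Real.sqrt y ≤ Real.sqrt |x - y| := by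
  rcases le_total x y with h | h
  · have h1 := Real.sqrt_le_sqrt h
    have h2 := Real.sqrt_nonneg |x - y|
    linarith
  · rcases le_total y 0 with hy | hy
    · have h1 : Real.sqrt y = 0 := Real.sqrt_eq_zero'.mpr (by linarith)
      rw [h1, abs_of_nonneg (by linarith : (0:ℝ) ≤ x - y)]
      have := Real.sqrt_le_sqrt (by linarith : x ≤ x - y)
      linarith
    · have hxy : (0:ℝ) ≤ x - y := by linarith
      have key : x ≤ (Real.sqrt y + Real.sqrt (x - y))^2 := by
        have h1 := Real.sq_sqrt hy
        have h2 := Real.sq_sqrt hxy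
        nlinarith [mul_nonneg (Real.sqrt_nonneg y) (Real.sqrt_nonneg (x-y))]
      have h3 := Real.sqrt_le_sqrt key
      rw [Real.sqrt_sq (by positivity)] at h3
      rw [abs_of_nonneg hxy]
      linarith

lemma key_compare {S : Type*} [Fintype S] (C : ℝ) (hC : 0 ≤ C)
    (δ : ℝ) (hδ : 0 ≤ δ) (r r' X : S → ℝ)
    (hr : ∀ s, 0 ≤ r s) (hr1 : ∑ s, r s = 1)
    (hr' : ∀ s, 0 ≤ r' s) (hr1' : ∑ s, r' s = 1)
    (hX : ∀ s, |X s| ≤ C) :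
    (∑ s, r s * X s) - Real.sqrt (δ * varDist r X)
      ≤ (∑ s, r' s * X s) - Real.sqrt (δ * varDist r' X)
        + C * (∑ s, |r s - r' s|) + C * Real.sqrt (3 * δ * (∑ s, |r s - r' s|)) := by
  set M : ℝ := ∑ s, |r s - r' s| with hMdef
  have hM : 0 ≤ M := Finset.sum_nonneg (fun s _ => abs_nonneg _)
  have h1 : |∑ s, r s * X s - ∑ s, r' s * X s| ≤ C * M := by
    rw [← Finset.sum_sub_distrib]
    calc |∑ s, (r s * X s - r' s * X s)| ≤ ∑ s, |r s * X s - r' s * X s| :=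
          Finset.abs_sum_le_sum_abs _ _
      _ ≤ ∑ s, |r s - r' s| * C := by
          apply Finset.sum_le_sum
          intro s _
          rw [← sub_mul, abs_mul]
          exact mul_le_mul_of_nonneg_left (hX s) (abs_nonneg _)
      _ = C * M := by rw [hMdef, ← Finset.sum_mul]; ring
  have h1sq : |∑ s, r s * X s ^ 2 - ∑ s, r' s * X s ^ 2| ≤ C ^ 2 * M := by
    rw [← Finset.sum_sub_distrib]
    calc |∑ s, (r s * X s ^ 2 - r' s * X s ^ 2)| ≤ ∑ s, |r s * X s ^ 2 - r' s * X s ^ 2| :=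
          Finset.abs_sum_le_sum_abs _ _
      _ ≤ ∑ s, |r s - r' s| * C ^ 2 := by
          apply Finset.sum_le_sum
          intro s _
          rw [← sub_mul, abs_mul]
          apply mul_le_mul_of_nonneg_left _ (abs_nonneg _)
          rw [abs_pow]
          exact pow_le_pow_left₀ (abs_nonneg _) (hX s) 2
      _ = C ^ 2 * M := by rw [hMdef, ← Finset.sum_mul]; ring
  have hbound : ∀ w : S → ℝ, (∀ s, 0 ≤ w s) → (∑ s, w s) = 1 → |∑ s, w s * X s| ≤ C := by
    intro w hw hw1
    calc |∑ s, w s * X s| ≤ ∑ s, |w s * X s| := Finset.abs_sum_le_sum_abs _ _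
      _ ≤ ∑ s, w s * C := by
          apply Finset.sum_le_sum
          intro s _
          rw [abs_mul, abs_of_nonneg (hw s)]
          exact mul_le_mul_of_nonneg_left (hX s) (hw s)
      _ = C := by rw [← Finset.sum_mul, hw1, one_mul]
  have hbr := hbound r hr hr1
  have hbr' := hbound r' hr' hr1'
  have hvar : |varDist r X - varDist r' X| ≤ 3 * C ^ 2 * M := by
    have e : varDist r X - varDist r' X
        = (∑ s, r s * X s ^ 2 - ∑ s, r' s * X s ^ 2)
          - ((∑ s, r s * X s) ^ 2 - (∑ s, r' s * X s) ^ 2) := by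
      unfold varDist; ring
    rw [e]
    have e2 : |(∑ s, r s * X s) ^ 2 - (∑ s, r' s * X s) ^ 2| ≤ 2 * C * (C * M) := by
      have : (∑ s, r s * X s) ^ 2 - (∑ s, r' s * X s) ^ 2
          = (∑ s, r s * X s + ∑ s, r' s * X s) * (∑ s, r s * X s - ∑ s, r' s * X s) := by ring
      rw [this, abs_mul]
      have ha : |∑ s, r s * X s + ∑ s, r' s * X s| ≤ 2 * C := by
        calc |∑ s, r s * X s + ∑ s, r' s * X s| ≤ |∑ s, r s * X s| + |∑ s, r' s * X s| :=
              abs_add_le _ _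
          _ ≤ 2 * C := by linarith
      exact mul_le_mul ha h1 (abs_nonneg _) (by linarith)
    calc |_ - _| ≤ |∑ s, r s * X s ^ 2 - ∑ s, r' s * X s ^ 2|
          + |(∑ s, r s * X s) ^ 2 - (∑ s, r' s * X s) ^ 2| := abs_sub _ _
      _ ≤ 3 * C ^ 2 * M := by nlinarith
  have hsqrt : Real.sqrt (δ * varDist r X)
      ≤ Real.sqrt (δ * varDist r' X) + C * Real.sqrt (3 * δ * M) := by
    have h := sqrt_sub_le_sqrt_abs (δ * varDist r X) (δ * varDist r' X)
    have e : |δ * varDist r X - δ * varDist r' X| = δ * |varDist r X - varDist r' X| := by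
      rw [← mul_sub, abs_mul, abs_of_nonneg hδ]
    have h2 : Real.sqrt |δ * varDist r X - δ * varDist r' X|
        ≤ Real.sqrt (δ * (3 * C ^ 2 * M)) := by
      apply Real.sqrt_le_sqrt
      rw [e]
      exact mul_le_mul_of_nonneg_left hvar hδ
    have h3 : Real.sqrt (δ * (3 * C ^ 2 * M)) = C * Real.sqrt (3 * δ * M) := by
      rw [show δ * (3 * C ^ 2 * M) = C ^ 2 * (3 * δ * M) by ring,
        Real.sqrt_mul (sq_nonneg C), Real.sqrt_sq hC]
    linarith
  have hsqrt' : Real.sqrt (δ * varDist r' X)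
      ≤ Real.sqrt (δ * varDist r X) + C * Real.sqrt (3 * δ * M) := by
    have h := sqrt_sub_le_sqrt_abs (δ * varDist r' X) (δ * varDist r X)
    have e : |δ * varDist r' X - δ * varDist r X| = δ * |varDist r X - varDist r' X| := by
      rw [← mul_sub, abs_mul, abs_of_nonneg hδ, abs_sub_comm]
    have h2 : Real.sqrt |δ * varDist r' X - δ * varDist r X|
        ≤ Real.sqrt (δ * (3 * C ^ 2 * M)) := by
      apply Real.sqrt_le_sqrt
      rw [e]
      exact mul_le_mul_of_nonneg_left hvar hδ
    have h3 : Real.sqrt (δ * (3 * C ^ 2 * M)) = C * Real.sqrt (3 * δ * M) := by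
      rw [show δ * (3 * C ^ 2 * M) = C ^ 2 * (3 * δ * M) by ring,
        Real.sqrt_mul (sq_nonneg C), Real.sqrt_sq hC]
    linarith
  have h1' := (abs_le.mp h1).2
  linarith

lemma sum_weighted_abs_le {S : Type*} [Fintype S] (w X : S → ℝ) (C : ℝ)
    (hw : ∀ s, 0 ≤ w s) (hw1 : ∑ s, w s = 1) (hX : ∀ s, |X s| ≤ C) :
    |∑ s, w s * X s| ≤ C := by
  calc |∑ s, w s * X s| ≤ ∑ s, |w s * X s| := Finset.abs_sum_le_sum_abs _ _
    _ ≤ ∑ s, w s * C := by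
        apply Finset.sum_le_sum
        intro s _
        rw [abs_mul, abs_of_nonneg (hw s)]
        exact mul_le_mul_of_nonneg_left (hX s) (hw s)
    _ = C := by rw [← Finset.sum_mul, hw1, one_mul]

theorem chi_square_dual_perturbation
    {S : Type*} [Fintype S] [Nonempty S]
    (p q : S → ℝ)
    (hp : (∀ s, 0 ≤ p s) ∧ ∑ s, p s = 1)
    (hq : (∀ s, 0 ≤ q s) ∧ ∑ s, q s = 1)
    (δ : ℝ) (hδ : 0 < δ) (V : S → ℝ) :
    |sSup {x : ℝ | ∃ μ : S → ℝ, (∀ s, 0 ≤ μ s ∧ μ s ≤ V s + ‖V‖) ∧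
        x = (∑ s, p s * (V s - μ s))
              - Real.sqrt (δ * varDist p (fun s => V s - μ s))}
      - sSup {x : ℝ | ∃ μ : S → ℝ, (∀ s, 0 ≤ μ s ∧ μ s ≤ V s + ‖V‖) ∧
        x = (∑ s, q s * (V s - μ s))
              - Real.sqrt (δ * varDist q (fun s => V s - μ s))}|
      ≤ 3 * ‖V‖ * (∑ s, |p s - q s|)
        + 3 * ‖V‖ * Real.sqrt (3 * δ * ∑ s, |p s - q s|) := by
  obtain ⟨hp0, hp1⟩ := hp
  obtain ⟨hq0, hq1⟩ := hq
  have hVs : ∀ s, |V s| ≤ ‖V‖ := fun s => by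
    have := norm_le_pi_norm V s
    simpa using this
  have hC : (0:ℝ) ≤ ‖V‖ := norm_nonneg V
  have hLnn : (0:ℝ) ≤ ∑ s, |p s - q s| := Finset.sum_nonneg fun s _ => abs_nonneg _
  have hXbd : ∀ μ : S → ℝ, (∀ s, 0 ≤ μ s ∧ μ s ≤ V s + ‖V‖) →
      ∀ s, |V s - μ s| ≤ ‖V‖ := by
    intro μ hμ s
    rw [abs_le]
    have h1 := (hμ s).1
    have h2 := (hμ s).2
    have h3 := abs_le.mp (hVs s)
    constructor <;> [linarith; linarith [h3.2]]
  have hne : ∀ r : S → ℝ,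
      Set.Nonempty {x : ℝ | ∃ μ : S → ℝ, (∀ s, 0 ≤ μ s ∧ μ s ≤ V s + ‖V‖) ∧
        x = (∑ s, r s * (V s - μ s))
              - Real.sqrt (δ * varDist r (fun s => V s - μ s))} := by
    intro r
    refine ⟨_, fun _ => 0, fun s => ⟨le_refl 0, ?_⟩, rfl⟩
    show (0:ℝ) ≤ V s + ‖V‖
    have := (abs_le.mp (hVs s)).1
    linarith
  have hbdd : ∀ r : S → ℝ, (∀ s, 0 ≤ r s) → (∑ s, r s = 1) →
      BddAbove {x : ℝ | ∃ μ : S → ℝ, (∀ s, 0 ≤ μ s ∧ μ s ≤ V s + ‖V‖) ∧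
        x = (∑ s, r s * (V s - μ s))
              - Real.sqrt (δ * varDist r (fun s => V s - μ s))} := by
    intro r hr0 hr1
    refine ⟨‖V‖, fun x hx => ?_⟩
    obtain ⟨μ, hμ, rfl⟩ := hx
    have hb := sum_weighted_abs_le r (fun s => V s - μ s) ‖V‖ hr0 hr1 (hXbd μ hμ)
    have := Real.sqrt_nonneg (δ * varDist r (fun s => V s - μ s))
    have := (abs_le.mp hb).2
    linarith
  have main : ∀ r r' : S → ℝ, (∀ s, 0 ≤ r s) → (∑ s, r s = 1) →
      (∀ s, 0 ≤ r' s) → (∑ s, r' s = 1) →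
      sSup {x : ℝ | ∃ μ : S → ℝ, (∀ s, 0 ≤ μ s ∧ μ s ≤ V s + ‖V‖) ∧
        x = (∑ s, r s * (V s - μ s))
              - Real.sqrt (δ * varDist r (fun s => V s - μ s))}
      ≤ sSup {x : ℝ | ∃ μ : S → ℝ, (∀ s, 0 ≤ μ s ∧ μ s ≤ V s + ‖V‖) ∧
        x = (∑ s, r' s * (V s - μ s))
              - Real.sqrt (δ * varDist r' (fun s => V s - μ s))}
        + ‖V‖ * (∑ s, |r s - r' s|)
        + ‖V‖ * Real.sqrt (3 * δ * (∑ s, |r s - r' s|)) := by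
    intro r r' hr0 hr1 hr0' hr1'
    apply csSup_le (hne r)
    intro x hx
    obtain ⟨μ, hμ, rfl⟩ := hx
    have hk := key_compare ‖V‖ hC δ hδ.le r r' (fun s => V s - μ s) hr0 hr1 hr0' hr1'
      (hXbd μ hμ)
    have hmem : (∑ s, r' s * (V s - μ s))
          - Real.sqrt (δ * varDist r' (fun s => V s - μ s))
        ∈ {x : ℝ | ∃ μ : S → ℝ, (∀ s, 0 ≤ μ s ∧ μ s ≤ V s + ‖V‖) ∧
        x = (∑ s, r' s * (V s - μ s))
              - Real.sqrt (δ * varDist r' (fun s => V s - μ s))} := ⟨μ, hμ, rfl⟩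
    have hle := le_csSup (hbdd r' hr0' hr1') hmem
    linarith
  have m1 := main p q hp0 hp1 hq0 hq1
  have m2 := main q p hq0 hq1 hp0 hp1
  rw [show (∑ s, |q s - p s|) = ∑ s, |p s - q s| from
    Finset.sum_congr rfl (fun s _ => abs_sub_comm _ _)] at m2
  have hs : (0:ℝ) ≤ Real.sqrt (3 * δ * ∑ s, |p s - q s|) := Real.sqrt_nonneg _
  have h1 : (0:ℝ) ≤ ‖V‖ * (∑ s, |p s - q s|) := mul_nonneg hC hLnn
  have h2 : (0:ℝ) ≤ ‖V‖ * Real.sqrt (3 * δ * ∑ s, |p s - q s|) := mul_nonneg hC hs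
  rw [abs_sub_le_iff]
  constructor <;> linarith
end

section
/- Perturbation bound for the Wasserstein dual value (step in the proof that the multi-level Monte-Carlo estimator for the Wasserstein uncertainty set is unbiased): let (S,d) be a nonempty finite metric space with diameter D := max_{x,y} d(x,y), l ≥ 1 and δ > 0. For any p, q ∈ Δ(S) and any V : S → ℝ, |sup_{0 ≤ λ ≤ 2‖V‖/δ^l}(−λδ^l + Σ_x p(x)·min_{y}(V(y) + λ·d(x,y)^l)) − sup_{0 ≤ λ ≤ 2‖V‖/δ^l}(−λδ^l + Σ_x q(x)·min_{y}(V(y) + λ·d(x,y)^l))| ≤ (1 + 2D^l/δ^l)·‖V‖·‖p − q‖₁. -/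
theorem wasserstein_dual_perturbation
    {S : Type*} [Fintype S] [Nonempty S] [MetricSpace S]
    (l : ℝ) (hl : 1 ≤ l) (δ : ℝ) (hδ : 0 < δ)
    (D : ℝ)
    (hD : D = Finset.univ.sup' Finset.univ_nonempty
      (fun xy : S × S => dist xy.1 xy.2))
    (p q : S → ℝ)
    (hp : (∀ s, 0 ≤ p s) ∧ ∑ s, p s = 1)
    (hq : (∀ s, 0 ≤ q s) ∧ ∑ s, q s = 1)
    (V : S → ℝ) :
    |sSup {z : ℝ | ∃ lam : ℝ, (0 ≤ lam ∧ lam ≤ 2 * ‖V‖ / δ ^ l) ∧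
        z = -lam * δ ^ l + ∑ x, p x * Finset.univ.inf' Finset.univ_nonempty
              (fun y => V y + lam * dist x y ^ l)}
      - sSup {z : ℝ | ∃ lam : ℝ, (0 ≤ lam ∧ lam ≤ 2 * ‖V‖ / δ ^ l) ∧
        z = -lam * δ ^ l + ∑ x, q x * Finset.univ.inf' Finset.univ_nonempty
              (fun y => V y + lam * dist x y ^ l)}|
      ≤ (1 + 2 * D ^ l / δ ^ l) * ‖V‖ * ∑ s, |p s - q s| := by
  obtain ⟨hp0, hp1⟩ := hp
  obtain ⟨hq0, hq1⟩ := hq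
  have hl0 : l ≠ 0 := by linarith
  have hδl : (0:ℝ) < δ ^ l := Real.rpow_pos_of_pos hδ l
  have hK : (0:ℝ) ≤ 2 * ‖V‖ / δ ^ l := by positivity
  have hmle : ∀ (lam : ℝ) (x : S),
      Finset.univ.inf' Finset.univ_nonempty (fun y => V y + lam * dist x y ^ l) ≤ ‖V‖ := by
    intro lam x
    have h1 : Finset.univ.inf' Finset.univ_nonempty (fun y => V y + lam * dist x y ^ l)
        ≤ V x + lam * dist x x ^ l := Finset.inf'_le _ (Finset.mem_univ x)
    have h2 : V x + lam * dist x x ^ l = V x := by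
      simp [Real.zero_rpow hl0]
    rw [h2] at h1
    calc Finset.univ.inf' Finset.univ_nonempty (fun y => V y + lam * dist x y ^ l)
        ≤ V x := h1
      _ ≤ |V x| := le_abs_self _
      _ ≤ ‖V‖ := by simpa using norm_le_pi_norm V x
  have hmge : ∀ (lam : ℝ), 0 ≤ lam → ∀ (x : S),
      -‖V‖ ≤ Finset.univ.inf' Finset.univ_nonempty (fun y => V y + lam * dist x y ^ l) := by
    intro lam hlam x
    apply Finset.le_inf'
    intro y _
    have h1 : -‖V‖ ≤ V y := by
      have h := norm_le_pi_norm V y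
      simp only [Real.norm_eq_abs] at h
      linarith [neg_abs_le (V y)]
    have h2 : 0 ≤ lam * dist x y ^ l :=
      mul_nonneg hlam (Real.rpow_nonneg dist_nonneg l)
    linarith
  have hmabs : ∀ (lam : ℝ), 0 ≤ lam → ∀ (x : S),
      |Finset.univ.inf' Finset.univ_nonempty (fun y => V y + lam * dist x y ^ l)| ≤ ‖V‖ := by
    intro lam hlam x
    rw [abs_le]
    exact ⟨hmge lam hlam x, hmle lam x⟩
  have key : ∀ r r' : S → ℝ, (∀ s, 0 ≤ r' s) → ∑ s, r' s = 1 →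
      sSup {z : ℝ | ∃ lam : ℝ, (0 ≤ lam ∧ lam ≤ 2 * ‖V‖ / δ ^ l) ∧
        z = -lam * δ ^ l + ∑ x, r x * Finset.univ.inf' Finset.univ_nonempty
              (fun y => V y + lam * dist x y ^ l)}
      ≤ sSup {z : ℝ | ∃ lam : ℝ, (0 ≤ lam ∧ lam ≤ 2 * ‖V‖ / δ ^ l) ∧
        z = -lam * δ ^ l + ∑ x, r' x * Finset.univ.inf' Finset.univ_nonempty
              (fun y => V y + lam * dist x y ^ l)}
        + ‖V‖ * ∑ s, |r s - r' s| := by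
    intro r r' hr'0 hr'1
    set B := {z : ℝ | ∃ lam : ℝ, (0 ≤ lam ∧ lam ≤ 2 * ‖V‖ / δ ^ l) ∧
        z = -lam * δ ^ l + ∑ x, r' x * Finset.univ.inf' Finset.univ_nonempty
              (fun y => V y + lam * dist x y ^ l)} with hB
    have hBbdd : BddAbove B := by
      refine ⟨‖V‖, ?_⟩
      rintro z ⟨lam, ⟨hlam0, _⟩, rfl⟩
      have h1 : ∑ x, r' x * Finset.univ.inf' Finset.univ_nonempty
          (fun y => V y + lam * dist x y ^ l) ≤ ∑ x, r' x * ‖V‖ := by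
        apply Finset.sum_le_sum
        intro x _
        exact mul_le_mul_of_nonneg_left (hmle lam x) (hr'0 x)
      have h2 : ∑ x, r' x * ‖V‖ = ‖V‖ := by
        rw [← Finset.sum_mul, hr'1, one_mul]
      have h3 : -lam * δ ^ l ≤ 0 := by nlinarith
      linarith [h1, h2.le]
    apply csSup_le
    · exact ⟨-0 * δ ^ l + ∑ x, r x * Finset.univ.inf' Finset.univ_nonempty
        (fun y => V y + (0:ℝ) * dist x y ^ l), 0, ⟨le_refl 0, hK⟩, rfl⟩
    rintro z ⟨lam, ⟨hlam0, hlamK⟩, rfl⟩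
    have hmem : -lam * δ ^ l + ∑ x, r' x * Finset.univ.inf' Finset.univ_nonempty
        (fun y => V y + lam * dist x y ^ l) ∈ B := ⟨lam, ⟨hlam0, hlamK⟩, rfl⟩
    have hle : -lam * δ ^ l + ∑ x, r' x * Finset.univ.inf' Finset.univ_nonempty
        (fun y => V y + lam * dist x y ^ l) ≤ sSup B := le_csSup hBbdd hmem
    have hdiff : (∑ x, r x * Finset.univ.inf' Finset.univ_nonempty
          (fun y => V y + lam * dist x y ^ l))
        - ∑ x, r' x * Finset.univ.inf' Finset.univ_nonempty
          (fun y => V y + lam * dist x y ^ l)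
        ≤ ‖V‖ * ∑ s, |r s - r' s| := by
      rw [← Finset.sum_sub_distrib]
      calc ∑ x, (r x * Finset.univ.inf' Finset.univ_nonempty
              (fun y => V y + lam * dist x y ^ l)
            - r' x * Finset.univ.inf' Finset.univ_nonempty
              (fun y => V y + lam * dist x y ^ l))
          = ∑ x, (r x - r' x) * Finset.univ.inf' Finset.univ_nonempty
              (fun y => V y + lam * dist x y ^ l) := by
            apply Finset.sum_congr rfl; intro x _; ring
        _ ≤ ∑ x, |(r x - r' x) * Finset.univ.inf' Finset.univ_nonempty
              (fun y => V y + lam * dist x y ^ l)| :=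
            Finset.sum_le_sum (fun x _ => le_abs_self _)
        _ ≤ ∑ x, |r x - r' x| * ‖V‖ := by
            apply Finset.sum_le_sum
            intro x _
            rw [abs_mul]
            exact mul_le_mul_of_nonneg_left (hmabs lam hlam0 x) (abs_nonneg _)
        _ = ‖V‖ * ∑ s, |r s - r' s| := by rw [← Finset.sum_mul]; ring
    linarith
  have h1 := key p q hq0 hq1
  have h2 := key q p hp0 hp1
  have hsum : ∑ s, |q s - p s| = ∑ s, |p s - q s| := by
    apply Finset.sum_congr rfl; intro s _; rw [abs_sub_comm]
  rw [hsum] at h2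
  have hD0 : 0 ≤ D := by
    obtain ⟨s⟩ := (inferInstance : Nonempty S)
    have := Finset.le_sup' (f := fun xy : S × S => dist xy.1 xy.2)
      (Finset.mem_univ (s, s))
    rw [hD]
    simpa using this
  have hDl : (0:ℝ) ≤ D ^ l := Real.rpow_nonneg hD0 l
  have ht : (0:ℝ) ≤ 2 * D ^ l / δ ^ l := by positivity
  have hfin : ‖V‖ * ∑ s, |p s - q s| ≤ (1 + 2 * D ^ l / δ ^ l) * ‖V‖ * ∑ s, |p s - q s| := by
    have hV : (0:ℝ) ≤ ‖V‖ := norm_nonneg V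
    have hS : (0:ℝ) ≤ ∑ s, |p s - q s| := Finset.sum_nonneg (fun s _ => abs_nonneg _)
    nlinarith
  rw [abs_sub_le_iff]
  constructor <;> linarith
end

section
/- Lemma 5 (strong duality for the Wasserstein-distance uncertainty set). Let (S,d) be a nonempty finite metric space, l ∈ [1,∞), δ > 0, p ∈ Δ(S), and V : S → ℝ. Define the l-Wasserstein distance between q, p ∈ Δ(S) as W_l(q,p) := inf over couplings μ of (p,q) of (Σ_{x,y} μ(x,y)·d(x,y)^l)^{1/l}, where a coupling is a probability distribution on S×S whose two marginals are p and q respectively. Then min over q ∈ Δ(S) with W_l(p,q) ≤ δ of q·V equals sup_{λ ≥ 0} (−λ·δ^l + Σ_x p(x)·min_{y ∈ S}(V(y) + λ·d(x,y)^l)). -/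
/-!
Weak duality is the Lagrangian bound: for every coupling `μ` of `p` and `q` and every `λ`, the
dual objective at `λ` is at most `Σ μ V + λ (cost μ - δ^l)`, and near-optimal couplings have cost
close to `W_l(p, q)^l ≤ δ^l`.

For the converse, the dual objective is the lower envelope of the finitely many affine functions
`λ ↦ Σ μ_σ V + λ (cost μ_σ - δ^l)`, where `μ_σ` is the coupling given by a transport map
`σ : S → S`. It tends to `-∞`, so it attains its maximum on `[0, ∞)` at some `λ₀`. One-sided
optimality at `λ₀` produces a map that is tight at `λ₀` with nonpositive slope and, when `λ₀ > 0`,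
one with nonnegative slope. Mixing the two couplings so that the combined slope is nonpositive, and
zero when `λ₀ > 0` (complementary slackness), gives a feasible `q` whose value `q · V` is the dual
optimum.
-/

noncomputable def wassersteinDist {S : Type*} [Fintype S] [MetricSpace S]
    (l : ℝ) (p q : S → ℝ) : ℝ :=
  sInf {w : ℝ | ∃ μ : S → S → ℝ,
    (∀ x y, 0 ≤ μ x y) ∧ (∀ x, ∑ y, μ x y = p x) ∧ (∀ y, ∑ x, μ x y = q y) ∧
    w = (∑ x, ∑ y, μ x y * dist x y ^ l) ^ (1 / l)}

open Filter Topology Set Finset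

theorem csInf_eq_csSup_of_forall_le {α : Type*} [ConditionallyCompleteLattice α] {A B : Set α}
    {z : α} (hA : z ∈ A) (hB : z ∈ B) (h : ∀ b ∈ B, ∀ a ∈ A, b ≤ a) : sInf A = sSup B :=
  (IsLeast.csInf_eq ⟨hA, fun a ha => h z hB a ha⟩).trans
    (IsGreatest.csSup_eq ⟨hB, fun b hb => h b hb z hA⟩).symm

theorem exists_eq_and_slope_nonpos_of_eventually_le_nhdsGT {ι : Type*} [Finite ι]
    {g : ℝ → ℝ} {a s : ι → ℝ} {t₀ : ℝ}
    (hle : ∀ i t, g t ≤ a i + t * s i) (hex : ∀ t, ∃ i, g t = a i + t * s i)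
    (hmax : ∀ᶠ t in 𝓝[>] t₀, g t ≤ g t₀) :
    ∃ i, g t₀ = a i + t₀ * s i ∧ s i ≤ 0 := by
  by_contra! hpos
  have hgt : ∀ i, ∀ᶠ t in 𝓝[>] t₀, g t₀ < a i + t * s i := by
    intro i
    rcases (hle i t₀).eq_or_lt with htight | hslack
    · filter_upwards [self_mem_nhdsWithin] with t (ht : t₀ < t)
      nlinarith [hpos i htight]
    · have hcont : Continuous fun t => a i + t * s i := by fun_prop
      exact (hcont.continuousAt.tendsto.mono_left nhdsWithin_le_nhds).eventually_const_lt hslack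
  obtain ⟨t, hlt, hle_t⟩ := ((eventually_all.2 hgt).and hmax).exists
  obtain ⟨i, hi⟩ := hex t
  linarith [hlt i]

theorem exists_eq_and_slope_nonneg_of_eventually_le_nhdsLT {ι : Type*} [Finite ι]
    {g : ℝ → ℝ} {a s : ι → ℝ} {t₀ : ℝ}
    (hle : ∀ i t, g t ≤ a i + t * s i) (hex : ∀ t, ∃ i, g t = a i + t * s i)
    (hmax : ∀ᶠ t in 𝓝[<] t₀, g t ≤ g t₀) :
    ∃ i, g t₀ = a i + t₀ * s i ∧ 0 ≤ s i := by
  have hmax' : ∀ᶠ t in 𝓝[>] (-t₀), g (-t) ≤ g (-(-t₀)) := by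
    rw [neg_neg]; exact tendsto_neg_nhdsGT_neg.eventually hmax
  obtain ⟨i, hi, hs⟩ := exists_eq_and_slope_nonpos_of_eventually_le_nhdsGT (g := fun t => g (-t))
    (a := a) (s := fun i => -s i) (fun i t => by simpa using hle i (-t))
    (fun t => by simpa using hex (-t)) hmax'
  exact ⟨i, by simpa using hi, by linarith⟩

theorem exists_isMaxOn_Ici_of_tendsto_atBot {f : ℝ → ℝ} (hf : Continuous f)
    (hlim : Tendsto f atTop atBot) (a : ℝ) : ∃ t₀ ∈ Ici a, IsMaxOn f (Ici a) t₀ := by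
  have hcoc : Tendsto (fun t => f (a + |t|)) (cocompact ℝ) atBot :=
    hlim.comp <| tendsto_atTop_add_const_left _ _ <|
      (tendsto_norm_cocompact_atTop (E := ℝ)).congr Real.norm_eq_abs
  obtain ⟨t, ht⟩ := (by fun_prop : Continuous fun t => f (a + |t|)).exists_forall_ge hcoc
  refine ⟨a + |t|, by simp, fun s (hs : a ≤ s) => ?_⟩
  simpa [abs_of_nonneg (sub_nonneg.2 hs)] using ht (s - a)

theorem exists_convex_comb_of_isMaxOn_Ici {ι : Type*} [Finite ι] {g : ℝ → ℝ} {a s : ι → ℝ}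
    (hle : ∀ i t, g t ≤ a i + t * s i) (hex : ∀ t, ∃ i, g t = a i + t * s i) {t₀ : ℝ}
    (ht₀ : 0 ≤ t₀) (hmax : IsMaxOn g (Ici 0) t₀) :
    ∃ i j θ, θ ∈ Icc (0 : ℝ) 1 ∧ θ * s i + (1 - θ) * s j ≤ 0 ∧
      g t₀ = θ * a i + (1 - θ) * a j := by
  obtain ⟨i, hi, hsi⟩ := exists_eq_and_slope_nonpos_of_eventually_le_nhdsGT hle hex
    (eventually_nhdsWithin_of_forall fun t (ht : t₀ < t) => hmax (ht₀.trans ht.le))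
  rcases ht₀.eq_or_lt with rfl | hpos
  · exact ⟨i, i, 1, by simp, by simpa using hsi, by simpa using hi⟩
  obtain ⟨j, hj, hsj⟩ := exists_eq_and_slope_nonneg_of_eventually_le_nhdsLT hle hex
    (eventually_of_mem (Ioo_mem_nhdsLT hpos) fun t ht => hmax ht.1.le)
  obtain ⟨θ, θ', hθ, hθ', hsum, hcomb⟩ : (0 : ℝ) ∈ segment ℝ (s i) (s j) := by
    rw [segment_eq_Icc (hsi.trans hsj)]; exact ⟨hsi, hsj⟩
  obtain rfl : θ' = 1 - θ := by linarith
  simp only [smul_eq_mul] at hcomb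
  refine ⟨i, j, θ, ⟨hθ, by linarith⟩, hcomb.le, ?_⟩
  linear_combination θ * hi + (1 - θ) * hj + t₀ * hcomb

section Wasserstein

variable {S : Type*}

def graphCoupling [DecidableEq S] (p : S → ℝ) (σ : S → S) (x y : S) : ℝ :=
  if y = σ x then p x else 0

theorem graphCoupling_nonneg [DecidableEq S] {p : S → ℝ} (hp : ∀ x, 0 ≤ p x) (σ : S → S)
    (x y : S) : 0 ≤ graphCoupling p σ x y := by
  unfold graphCoupling; split_ifs <;> simp [hp x]

variable [Fintype S]

def IsCoupling (p q : S → ℝ) (μ : S → S → ℝ) : Prop :=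
  (∀ x y, 0 ≤ μ x y) ∧ (∀ x, ∑ y, μ x y = p x) ∧ (∀ y, ∑ x, μ x y = q y)

theorem isCoupling_mul {p q : S → ℝ} (hp : ∑ x, p x = 1) (hq : ∑ y, q y = 1)
    (hp0 : ∀ x, 0 ≤ p x) (hq0 : ∀ y, 0 ≤ q y) : IsCoupling p q fun x y => p x * q y :=
  ⟨fun x y => mul_nonneg (hp0 x) (hq0 y), fun x => by rw [← mul_sum, hq, mul_one],
    fun y => by rw [← sum_mul, hp, one_mul]⟩

theorem IsCoupling.sum_sum_mul_right {p q : S → ℝ} {μ : S → S → ℝ} (hμ : IsCoupling p q μ)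
    (f : S → ℝ) : ∑ x, ∑ y, μ x y * f y = ∑ y, q y * f y := by
  rw [sum_comm]
  simp only [← sum_mul, hμ.2.2]

theorem sum_sum_add_mul (a b : ℝ) (μ ν f : S → S → ℝ) :
    ∑ x, ∑ y, (a * μ x y + b * ν x y) * f x y =
      a * ∑ x, ∑ y, μ x y * f x y + b * ∑ x, ∑ y, ν x y * f x y := by
  simp only [add_mul, sum_add_distrib, mul_sum, mul_assoc]

theorem sum_sum_graphCoupling_mul [DecidableEq S] (p : S → ℝ) (σ : S → S) (f : S → S → ℝ) :
    ∑ x, ∑ y, graphCoupling p σ x y * f x y = ∑ x, p x * f x (σ x) := by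
  simp [graphCoupling, ite_mul]

theorem sum_graphCoupling [DecidableEq S] (p : S → ℝ) (σ : S → S) (x : S) :
    ∑ y, graphCoupling p σ x y = p x := by
  simp [graphCoupling]

variable [MetricSpace S]

noncomputable def transportCost (l : ℝ) (μ : S → S → ℝ) : ℝ :=
  ∑ x, ∑ y, μ x y * dist x y ^ l

theorem transportCost_nonneg (l : ℝ) {μ : S → S → ℝ} (hμ : ∀ x y, 0 ≤ μ x y) :
    0 ≤ transportCost l μ :=
  sum_nonneg fun x _ => sum_nonneg fun y _ => mul_nonneg (hμ x y) (by positivity)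

theorem wassersteinDist_le_transportCost_rpow {l : ℝ} {p q : S → ℝ} {μ : S → S → ℝ}
    (hμ : IsCoupling p q μ) : wassersteinDist l p q ≤ transportCost l μ ^ (1 / l) := by
  refine csInf_le ⟨0, ?_⟩ ⟨μ, hμ.1, hμ.2.1, hμ.2.2, rfl⟩
  rintro _ ⟨ν, hν, -, -, rfl⟩
  exact Real.rpow_nonneg (transportCost_nonneg l hν) _

theorem exists_isCoupling_transportCost_lt {l w : ℝ} {p q : S → ℝ} (hl : 0 < l)
    (hne : ∃ μ, IsCoupling p q μ) (hw : wassersteinDist l p q < w) :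
    ∃ μ, IsCoupling p q μ ∧ transportCost l μ < w ^ l := by
  obtain ⟨μ₀, hμ₀⟩ := hne
  rw [wassersteinDist] at hw
  obtain ⟨_, ⟨μ, hμ0, hμp, hμq, rfl⟩, hlt⟩ :=
    exists_lt_of_csInf_lt (by exact ⟨_, μ₀, hμ₀.1, hμ₀.2.1, hμ₀.2.2, rfl⟩) hw
  refine ⟨μ, ⟨hμ0, hμp, hμq⟩, ?_⟩
  have hcost := transportCost_nonneg l hμ0
  calc transportCost l μ = (transportCost l μ ^ (1 / l)) ^ l := by
        rw [← Real.rpow_mul hcost, one_div_mul_cancel hl.ne', Real.rpow_one]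
    _ < w ^ l := Real.rpow_lt_rpow (by positivity) hlt hl

theorem exists_wassersteinDist_le_of_transportCost_le {l δ : ℝ} {p : S → ℝ} {μ : S → S → ℝ}
    (hl : 0 < l) (hδ : 0 ≤ δ) (hp : ∑ x, p x = 1) (hμ : ∀ x y, 0 ≤ μ x y)
    (hμp : ∀ x, ∑ y, μ x y = p x) (hcost : transportCost l μ ≤ δ ^ l) (V : S → ℝ) :
    ∃ q : S → ℝ, ((∀ y, 0 ≤ q y) ∧ ∑ y, q y = 1) ∧ wassersteinDist l p q ≤ δ ∧
      ∑ y, q y * V y = ∑ x, ∑ y, μ x y * V y := by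
  have hcpl : IsCoupling p (fun y => ∑ x, μ x y) μ := ⟨hμ, hμp, fun _ => rfl⟩
  refine ⟨_, ⟨fun y => sum_nonneg fun x _ => hμ x y, by rw [sum_comm]; simp [hμp, hp]⟩, ?_,
    (hcpl.sum_sum_mul_right V).symm⟩
  calc wassersteinDist l p _ ≤ transportCost l μ ^ (1 / l) :=
        wassersteinDist_le_transportCost_rpow hcpl
    _ ≤ (δ ^ l) ^ (1 / l) := by gcongr; exact transportCost_nonneg l hμ
    _ = δ := by rw [← Real.rpow_mul hδ, mul_one_div_cancel hl.ne', Real.rpow_one]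

variable [Nonempty S]

noncomputable def dualObjective (l δ : ℝ) (p V : S → ℝ) (lam : ℝ) : ℝ :=
  -lam * δ ^ l + ∑ x, p x * univ.inf' univ_nonempty fun y => V y + lam * dist x y ^ l

theorem continuous_dualObjective (l δ : ℝ) (p V : S → ℝ) :
    Continuous (dualObjective l δ p V) := by
  unfold dualObjective
  refine (by fun_prop : Continuous fun lam : ℝ => -lam * δ ^ l).add
    (continuous_finsetSum _ fun x _ => continuous_const.mul ?_)
  exact Continuous.finset_inf'_apply _ fun y _ => by fun_prop

theorem dualObjective_le {l δ : ℝ} {p V : S → ℝ} {μ : S → S → ℝ} (hμ : ∀ x y, 0 ≤ μ x y)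
    (hμp : ∀ x, ∑ y, μ x y = p x) (lam : ℝ) :
    dualObjective l δ p V lam ≤
      ∑ x, ∑ y, μ x y * V y + lam * (transportCost l μ - δ ^ l) := by
  have hrow : ∀ x, p x * univ.inf' univ_nonempty (fun y => V y + lam * dist x y ^ l) ≤
      ∑ y, μ x y * (V y + lam * dist x y ^ l) := fun x => by
    rw [← hμp, sum_mul]
    exact sum_le_sum fun y _ => mul_le_mul_of_nonneg_left (inf'_le _ (mem_univ y)) (hμ x y)
  have hsplit : ∑ x, ∑ y, μ x y * (V y + lam * dist x y ^ l) =
      ∑ x, ∑ y, μ x y * V y + lam * transportCost l μ := by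
    simp only [transportCost, mul_add, sum_add_distrib, mul_sum, mul_left_comm lam]
  unfold dualObjective
  linarith [Finset.sum_le_sum (s := univ) fun x _ => hrow x]

theorem exists_dualObjective_eq [DecidableEq S] (l δ : ℝ) (p V : S → ℝ) (lam : ℝ) :
    ∃ σ : S → S, dualObjective l δ p V lam =
      ∑ x, ∑ y, graphCoupling p σ x y * V y +
        lam * (transportCost l (graphCoupling p σ) - δ ^ l) := by
  choose σ _ hσ using fun x => exists_mem_eq_inf' univ_nonempty fun y => V y + lam * dist x y ^ l
  refine ⟨σ, ?_⟩
  simp only [dualObjective, transportCost, sum_sum_graphCoupling_mul, hσ, mul_add, sum_add_distrib,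
    mul_sub, mul_sum, mul_left_comm lam]
  ring

theorem tendsto_dualObjective_atTop {l δ : ℝ} (hl : 0 < l) (hδ : 0 < δ) {p : S → ℝ}
    (hp : ∀ x, 0 ≤ p x) (V : S → ℝ) : Tendsto (dualObjective l δ p V) atTop atBot := by
  classical
  have hdiag : transportCost l (graphCoupling p id) = 0 := by
    simp [transportCost, sum_sum_graphCoupling_mul, Real.zero_rpow hl.ne']
  refine tendsto_atBot_mono (fun lam => dualObjective_le (graphCoupling_nonneg hp id)
    (sum_graphCoupling p id) lam) ?_
  simp only [hdiag, zero_sub, mul_neg]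
  exact tendsto_atBot_add_const_left _ _
    (tendsto_neg_atTop_atBot.comp (tendsto_id.atTop_mul_const (by positivity)))

theorem dualObjective_le_of_wassersteinDist_le {l δ lam : ℝ} {p q : S → ℝ} (hl : 0 < l)
    (hp : ∑ x, p x = 1) (hq : ∑ y, q y = 1) (hp0 : ∀ x, 0 ≤ p x) (hq0 : ∀ y, 0 ≤ q y)
    (hW : wassersteinDist l p q ≤ δ) (hlam : 0 ≤ lam) (V : S → ℝ) :
    dualObjective l δ p V lam ≤ ∑ y, q y * V y := by
  have hgap : ∀ w, δ < w →
      dualObjective l δ p V lam ≤ ∑ y, q y * V y + lam * (w ^ l - δ ^ l) := by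
    intro w hw
    obtain ⟨μ, hμ, hcost⟩ :=
      exists_isCoupling_transportCost_lt hl ⟨_, isCoupling_mul hp hq hp0 hq0⟩ (hW.trans_lt hw)
    calc dualObjective l δ p V lam
        ≤ ∑ x, ∑ y, μ x y * V y + lam * (transportCost l μ - δ ^ l) :=
          dualObjective_le hμ.1 hμ.2.1 lam
      _ ≤ ∑ y, q y * V y + lam * (w ^ l - δ ^ l) := by
          rw [hμ.sum_sum_mul_right]; gcongr
  have hlim : Tendsto (fun w => ∑ y, q y * V y + lam * (w ^ l - δ ^ l)) (𝓝[>] δ)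
      (𝓝 (∑ y, q y * V y)) := by
    have hcont : ContinuousAt (fun w : ℝ => ∑ y, q y * V y + lam * (w ^ l - δ ^ l)) δ :=
      continuousAt_const.add <| continuousAt_const.mul <|
        (Real.continuousAt_rpow_const δ l (Or.inr hl.le)).sub continuousAt_const
    simpa using hcont.tendsto.mono_left nhdsWithin_le_nhds
  exact ge_of_tendsto hlim (eventually_nhdsWithin_of_forall hgap)

theorem exists_feasible_eq_dualObjective {l δ lam₀ : ℝ} {p : S → ℝ} (hl : 0 < l) (hδ : 0 ≤ δ)
    (hp : ∑ x, p x = 1) (hp0 : ∀ x, 0 ≤ p x) (V : S → ℝ) (hlam₀ : 0 ≤ lam₀)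
    (hmax : IsMaxOn (dualObjective l δ p V) (Ici 0) lam₀) :
    ∃ q : S → ℝ, ((∀ y, 0 ≤ q y) ∧ ∑ y, q y = 1) ∧ wassersteinDist l p q ≤ δ ∧
      ∑ y, q y * V y = dualObjective l δ p V lam₀ := by
  classical
  obtain ⟨σ₁, σ₂, θ, ⟨hθ0, hθ1⟩, hslope, hval⟩ :=
    exists_convex_comb_of_isMaxOn_Ici (a := fun σ => ∑ x, ∑ y, graphCoupling p σ x y * V y)
      (s := fun σ => transportCost l (graphCoupling p σ) - δ ^ l)
      (fun σ => dualObjective_le (graphCoupling_nonneg hp0 σ) (sum_graphCoupling p σ))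
      (exists_dualObjective_eq l δ p V) hlam₀ hmax
  set μ : S → S → ℝ := fun x y => θ * graphCoupling p σ₁ x y + (1 - θ) * graphCoupling p σ₂ x y
  have hμ : ∀ x y, 0 ≤ μ x y := fun x y => add_nonneg
    (mul_nonneg hθ0 (graphCoupling_nonneg hp0 σ₁ x y))
    (mul_nonneg (sub_nonneg.2 hθ1) (graphCoupling_nonneg hp0 σ₂ x y))
  have hμp : ∀ x, ∑ y, μ x y = p x := fun x => by
    simp only [μ, sum_add_distrib, ← mul_sum, sum_graphCoupling]; ring
  have hcost : transportCost l μ ≤ δ ^ l := by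
    simp only [transportCost, μ, sum_sum_add_mul] at hslope ⊢; linarith
  obtain ⟨q, hq, hW, hqV⟩ := exists_wassersteinDist_le_of_transportCost_le hl hδ hp hμ hμp hcost V
  exact ⟨q, hq, hW, by rw [hqV, hval, sum_sum_add_mul]⟩

end Wasserstein

theorem wasserstein_strong_duality
    {S : Type*} [Fintype S] [Nonempty S] [MetricSpace S]
    (l : ℝ) (hl : 1 ≤ l) (δ : ℝ) (hδ : 0 < δ)
    (p : S → ℝ) (hp : (∀ s, 0 ≤ p s) ∧ ∑ s, p s = 1)
    (V : S → ℝ) :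
    sInf {z : ℝ | ∃ q : S → ℝ, ((∀ s, 0 ≤ q s) ∧ ∑ s, q s = 1) ∧
        wassersteinDist l p q ≤ δ ∧ z = ∑ s, q s * V s}
      = sSup {z : ℝ | ∃ lam : ℝ, 0 ≤ lam ∧
          z = -lam * δ ^ l + ∑ x, p x * Finset.univ.inf' Finset.univ_nonempty
                (fun y => V y + lam * dist x y ^ l)} := by
  obtain ⟨hp0, hp1⟩ := hp
  have hl0 : 0 < l := by linarith
  obtain ⟨lam₀, hlam₀, hmax⟩ := exists_isMaxOn_Ici_of_tendsto_atBot
    (continuous_dualObjective l δ p V) (tendsto_dualObjective_atTop hl0 hδ hp0 V) 0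
  obtain ⟨q, hq, hW, hqV⟩ :=
    exists_feasible_eq_dualObjective hl0 hδ.le hp1 hp0 V hlam₀ hmax
  refine csInf_eq_csSup_of_forall_le ⟨q, hq, hW, rfl⟩ ⟨lam₀, hlam₀, hqV⟩ ?_
  rintro _ ⟨lam, hlam, rfl⟩ _ ⟨q', ⟨hq0', hq1'⟩, hW', rfl⟩
  exact dualObjective_le_of_wassersteinDist_le hl0 hp1 hq1' hp0 hq0' hW' hlam V
end

section
/- Unique equilibrium of the robust RVI TD stability ODE (proved in the stability Lemma for Algorithm 1): suppose that for each (s,a) the set 𝒫(s,a) ⊆ Δ(S) is nonempty and the infimum below is attained, that f : (S → ℝ) → ℝ satisfies f(x + c·e) = f(x) + c and f(c·x) = c·f(x) for all x : S → ℝ and all c ∈ ℝ, and that for every transition-kernel selection P, every h : S → ℝ with P^π h = h is a constant vector (a consequence of the unichain assumption). If W : S → ℝ satisfies W(s) = Σ_a π(a|s)·(min_{p ∈ 𝒫(s,a)} p·W) − f(W) for every s ∈ S, then W = 0. -/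
/-!
Choose, for every `(s, a)`, a kernel `P s a ∈ U s a` attaining the infimum. The equilibrium
equation then reads `P^π W = W + f(W)·e`. Since `P^π` is a stochastic matrix, evaluating at a
maximiser and at a minimiser of `W` gives `f W ≤ 0 ≤ f W`, so `W` is a fixed point of `P^π` and
hence constant by the unichain hypothesis. For a constant vector `c·e` the two properties of `f`
give `f (c·e) = c`, and `f W = 0` forces `c = 0`.
-/

open Finset

section WeightedSum

variable {ι : Type*} [Fintype ι] {w x : ι → ℝ} {b : ℝ}

lemma weighted_sum_le (hw : ∀ i, 0 ≤ w i) (hw1 : ∑ i, w i = 1) (hx : ∀ i, x i ≤ b) :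
    ∑ i, w i * x i ≤ b :=
  calc ∑ i, w i * x i ≤ ∑ i, w i * b :=
        sum_le_sum fun i _ => mul_le_mul_of_nonneg_left (hx i) (hw i)
    _ = b := by rw [← sum_mul, hw1, one_mul]

lemma le_weighted_sum (hw : ∀ i, 0 ≤ w i) (hw1 : ∑ i, w i = 1) (hx : ∀ i, b ≤ x i) :
    b ≤ ∑ i, w i * x i :=
  calc b = ∑ i, w i * b := by rw [← sum_mul, hw1, one_mul]
    _ ≤ ∑ i, w i * x i := sum_le_sum fun i _ => mul_le_mul_of_nonneg_left (hx i) (hw i)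

end WeightedSum

section PolicyAverage

variable {S A : Type*} [Fintype S] [Fintype A]

/-- The action of `P^π` on a vector `h : S → ℝ`. -/
def policyAverage (π : S → A → ℝ) (P : S → A → S → ℝ) (h : S → ℝ) (s : S) : ℝ :=
  ∑ a, π s a * ∑ s', P s a s' * h s'

variable {π : S → A → ℝ} {P : S → A → S → ℝ}
  (hπ : ∀ s, (∀ a, 0 ≤ π s a) ∧ ∑ a, π s a = 1)
  (hP : ∀ s a, (∀ s', 0 ≤ P s a s') ∧ ∑ s', P s a s' = 1)
include hπ hP

lemma policyAverage_le {h : S → ℝ} {b : ℝ} (hb : ∀ s, h s ≤ b) (s : S) :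
    policyAverage π P h s ≤ b :=
  weighted_sum_le (hπ s).1 (hπ s).2 fun a => weighted_sum_le (hP s a).1 (hP s a).2 hb

lemma le_policyAverage {h : S → ℝ} {b : ℝ} (hb : ∀ s, b ≤ h s) (s : S) :
    b ≤ policyAverage π P h s :=
  le_weighted_sum (hπ s).1 (hπ s).2 fun a => le_weighted_sum (hP s a).1 (hP s a).2 hb

lemma eq_zero_of_policyAverage_eq_add_const [Nonempty S] {h : S → ℝ} {k : ℝ}
    (hk : ∀ s, policyAverage π P h s = h s + k) : k = 0 := by
  obtain ⟨smax, hsmax⟩ := Finite.exists_max h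
  obtain ⟨smin, hsmin⟩ := Finite.exists_min h
  have hle := policyAverage_le hπ hP hsmax smax
  have hge := le_policyAverage hπ hP hsmin smin
  rw [hk] at hle hge
  linarith

end PolicyAverage

lemma apply_const_of_shift_of_hom {S : Type*} {f : (S → ℝ) → ℝ}
    (hfshift : ∀ (x : S → ℝ) (c : ℝ), f (fun s => x s + c) = f x + c)
    (hfhom : ∀ (x : S → ℝ) (c : ℝ), f (fun s => c * x s) = c * f x) (c : ℝ) :
    f (fun _ => c) = c := by
  have hf0 : f 0 = 0 := by simpa [← Pi.zero_def] using hfhom 0 0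
  simpa [hf0] using hfshift 0 c

lemma csInf_eq_of_mem_of_forall_le {α : Type*} {U : Set α} {g : α → ℝ} {p : α} (hp : p ∈ U)
    (hmin : ∀ p' ∈ U, g p ≤ g p') :
    sInf {x : ℝ | ∃ p ∈ U, x = g p} = g p :=
  IsLeast.csInf_eq ⟨⟨p, hp, rfl⟩, by rintro x ⟨p', hp', rfl⟩; exact hmin p' hp'⟩

theorem robust_rvi_td_unique_equilibrium_general
    {S A : Type*} [Fintype S] [Nonempty S] [Fintype A]
    (π : S → A → ℝ)
    (hπ : ∀ s, (∀ a, 0 ≤ π s a) ∧ ∑ a, π s a = 1)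
    (U : S → A → Set (S → ℝ))
    (hUsimplex : ∀ s a, ∀ p ∈ U s a, (∀ s', 0 ≤ p s') ∧ ∑ s', p s' = 1)
    (f : (S → ℝ) → ℝ)
    (hfshift : ∀ (x : S → ℝ) (c : ℝ), f (fun s => x s + c) = f x + c)
    (hfhom : ∀ (x : S → ℝ) (c : ℝ), f (fun s => c * x s) = c * f x)
    -- every fixed point of `P^π` is constant, for every kernel selection (unichain)
    (hUnichain : ∀ P : S → A → S → ℝ, (∀ s a, P s a ∈ U s a) →
      ∀ h : S → ℝ, (∀ s, ∑ a, π s a * ∑ s', P s a s' * h s' = h s) →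
        ∃ c : ℝ, ∀ s, h s = c)
    (W : S → ℝ)
    -- the infimum in the equilibrium equation is attained
    (hmin : ∀ s a, ∃ p ∈ U s a, ∀ p' ∈ U s a,
      ∑ s', p s' * W s' ≤ ∑ s', p' s' * W s')
    (hW : ∀ s, W s = (∑ a, π s a *
        sInf {x : ℝ | ∃ p ∈ U s a, x = ∑ s', p s' * W s'}) - f W) :
    W = 0 := by
  choose P hPU hPmin using hmin
  have hP : ∀ s a, (∀ s', 0 ≤ P s a s') ∧ ∑ s', P s a s' = 1 :=
    fun s a => hUsimplex s a _ (hPU s a)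
  have hinf : ∀ s a, sInf {x : ℝ | ∃ p ∈ U s a, x = ∑ s', p s' * W s'} =
      ∑ s', P s a s' * W s' := fun s a => csInf_eq_of_mem_of_forall_le (hPU s a) (hPmin s a)
  have hshift : ∀ s, policyAverage π P W s = W s + f W := fun s => by
    have hWs := hW s
    simp only [hinf] at hWs
    rw [policyAverage]
    linarith
  have hfW : f W = 0 := eq_zero_of_policyAverage_eq_add_const hπ hP hshift
  obtain ⟨c, hc⟩ := hUnichain P hPU W fun s => (hshift s).trans (add_eq_left.mpr hfW)
  obtain rfl : W = fun _ => c := funext hc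
  rw [apply_const_of_shift_of_hom hfshift hfhom] at hfW
  subst hfW
  rfl

theorem robust_rvi_td_unique_equilibrium
    {S A : Type*} [Fintype S] [Nonempty S] [Fintype A] [Nonempty A]
    (π : S → A → ℝ)
    (hπ : ∀ s, (∀ a, 0 ≤ π s a) ∧ ∑ a, π s a = 1)
    (U : S → A → Set (S → ℝ))
    (hUne : ∀ s a, (U s a).Nonempty)
    (hUsimplex : ∀ s a, ∀ p ∈ U s a, (∀ s', 0 ≤ p s') ∧ ∑ s', p s' = 1)
    (f : (S → ℝ) → ℝ)
    (hfshift : ∀ (x : S → ℝ) (c : ℝ), f (fun s => x s + c) = f x + c)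
    (hfhom : ∀ (x : S → ℝ) (c : ℝ), f (fun s => c * x s) = c * f x)
    -- every fixed point of `P^π` is constant, for every kernel selection (unichain)
    (hUnichain : ∀ P : S → A → S → ℝ, (∀ s a, P s a ∈ U s a) →
      ∀ h : S → ℝ, (∀ s, ∑ a, π s a * ∑ s', P s a s' * h s' = h s) →
        ∃ c : ℝ, ∀ s, h s = c)
    (W : S → ℝ)
    -- the infimum in the equilibrium equation is attained
    (hmin : ∀ s a, ∃ p ∈ U s a, ∀ p' ∈ U s a,
      ∑ s', p s' * W s' ≤ ∑ s', p' s' * W s')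
    (hW : ∀ s, W s = (∑ a, π s a *
        sInf {x : ℝ | ∃ p ∈ U s a, x = ∑ s', p s' * W s'}) - f W) :
    W = 0 :=
  robust_rvi_td_unique_equilibrium_general π hπ U hUsimplex f hfshift hfhom hUnichain W hmin hW
end

section
/- Unique equilibrium of the robust RVI Q-learning stability ODE (proved in the stability Lemma for Algorithm 2): suppose that for each (s,a) the set 𝒫(s,a) ⊆ Δ(S) is nonempty and the infimum below is attained, that f : (S×A → ℝ) → ℝ satisfies f(Q + c·e) = f(Q) + c and f(c·Q) = c·f(Q) for all Q : S×A → ℝ and all c ∈ ℝ (e the all-ones function on S×A), and that for every deterministic policy a* : S → A and every transition-kernel selection P, every h : S → ℝ with P^{a*} h = h is a constant vector (a consequence of the unichain assumption for all policies). If Q : S×A → ℝ satisfies Q(s,a) = min_{p ∈ 𝒫(s,a)} p·V_Q − f(Q) for all (s,a), where V_Q(s) := max_a Q(s,a), then Q = 0. -/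
theorem robust_rvi_q_learning_unique_equilibrium
    {S A : Type*} [Fintype S] [Nonempty S] [Fintype A] [Nonempty A]
    (U : S → A → Set (S → ℝ))
    (hUne : ∀ s a, (U s a).Nonempty)
    (hUsimplex : ∀ s a, ∀ p ∈ U s a, (∀ s', 0 ≤ p s') ∧ ∑ s', p s' = 1)
    (f : (S → A → ℝ) → ℝ)
    (hfshift : ∀ (Q : S → A → ℝ) (c : ℝ), f (fun s a => Q s a + c) = f Q + c)
    (hfhom : ∀ (Q : S → A → ℝ) (c : ℝ), f (fun s a => c * Q s a) = c * f Q)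
    -- for every deterministic policy and kernel selection, fixed points of
    -- `P^{a*}` are constant (unichain for all policies)
    (hUnichain : ∀ (astar : S → A) (P : S → A → S → ℝ), (∀ s a, P s a ∈ U s a) →
      ∀ h : S → ℝ, (∀ s, ∑ s', P s (astar s) s' * h s' = h s) →
        ∃ c : ℝ, ∀ s, h s = c)
    (Q : S → A → ℝ)
    (VQ : S → ℝ) (hVQ : ∀ s, VQ s = Finset.univ.sup' Finset.univ_nonempty (Q s))
    -- the infimum in the equilibrium equation is attained
    (hmin : ∀ s a, ∃ p ∈ U s a, ∀ p' ∈ U s a,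
      ∑ s', p s' * VQ s' ≤ ∑ s', p' s' * VQ s')
    (hQ : ∀ s a, Q s a =
        sInf {x : ℝ | ∃ p ∈ U s a, x = ∑ s', p s' * VQ s'} - f Q) :
    Q = 0 := by
  classical
  choose P hPmem hPmin using hmin
  have hInf : ∀ s a, sInf {x : ℝ | ∃ p ∈ U s a, x = ∑ s', p s' * VQ s'}
      = ∑ s', P s a s' * VQ s' := by
    intro s a
    apply IsLeast.csInf_eq
    constructor
    · exact ⟨P s a, hPmem s a, rfl⟩
    · rintro x ⟨p, hp, rfl⟩
      exact hPmin s a p hp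
  have hQ' : ∀ s a, Q s a = ∑ s', P s a s' * VQ s' - f Q := by
    intro s a; rw [hQ s a, hInf]
  -- greedy policy
  have hastar : ∀ s, ∃ a, VQ s = Q s a := by
    intro s
    obtain ⟨a, _, ha⟩ := Finset.exists_mem_eq_sup' Finset.univ_nonempty (Q s)
    exact ⟨a, (hVQ s).trans ha⟩
  choose astar hastarEq using hastar
  have key : ∀ s, ∑ s', P s (astar s) s' * VQ s' = VQ s + f Q := by
    intro s
    have h := hQ' s (astar s)
    rw [← hastarEq s] at h
    linarith
  -- convex combination bounds
  have hub : ∀ s a s0, (∀ s', VQ s' ≤ VQ s0) →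
      ∑ s', P s a s' * VQ s' ≤ VQ s0 := by
    intro s a s0 hs0
    have hp := hUsimplex s a (P s a) (hPmem s a)
    calc ∑ s', P s a s' * VQ s' ≤ ∑ s', P s a s' * VQ s0 := by
          apply Finset.sum_le_sum
          intro i _
          exact mul_le_mul_of_nonneg_left (hs0 i) (hp.1 i)
      _ = VQ s0 := by rw [← Finset.sum_mul, hp.2, one_mul]
  have hlb : ∀ s a s0, (∀ s', VQ s0 ≤ VQ s') →
      VQ s0 ≤ ∑ s', P s a s' * VQ s' := by
    intro s a s0 hs0
    have hp := hUsimplex s a (P s a) (hPmem s a)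
    calc VQ s0 = ∑ s', P s a s' * VQ s0 := by rw [← Finset.sum_mul, hp.2, one_mul]
      _ ≤ ∑ s', P s a s' * VQ s' := by
          apply Finset.sum_le_sum
          intro i _
          exact mul_le_mul_of_nonneg_left (hs0 i) (hp.1 i)
  -- f Q = 0
  obtain ⟨smax, _, hsmax⟩ := Finset.exists_max_image Finset.univ VQ Finset.univ_nonempty
  obtain ⟨smin, _, hsmin⟩ := Finset.exists_min_image Finset.univ VQ Finset.univ_nonempty
  have hf1 : f Q ≤ 0 := by
    have h1 := hub smax (astar smax) smax (fun s' => hsmax s' (Finset.mem_univ s'))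
    have h2 := key smax
    linarith
  have hf2 : 0 ≤ f Q := by
    have h1 := hlb smin (astar smin) smin (fun s' => hsmin s' (Finset.mem_univ s'))
    have h2 := key smin
    linarith
  have hf0 : f Q = 0 := le_antisymm hf1 hf2
  -- VQ is a fixed point, hence constant
  obtain ⟨c, hc⟩ := hUnichain astar P hPmem VQ (by
    intro s
    rw [key s, hf0, add_zero])
  -- Q is constant c
  have hQc : ∀ s a, Q s a = c := by
    intro s a
    have hp := hUsimplex s a (P s a) (hPmem s a)
    have : ∑ s', P s a s' * VQ s' = c := by
      have : ∑ s', P s a s' * VQ s' = ∑ s', P s a s' * c := by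
        apply Finset.sum_congr rfl
        intro i _; rw [hc i]
      rw [this, ← Finset.sum_mul, hp.2, one_mul]
    rw [hQ' s a, this, hf0, sub_zero]
  -- f of the constant c is c, hence c = 0
  have hQeq : Q = fun s a => (fun _ _ => (0:ℝ)) s a + c := by
    funext s a; simp [hQc s a]
  have hf00 : f (fun _ _ => (0:ℝ)) = 0 := by
    have := hfhom (fun _ _ => (0:ℝ)) 0
    simpa using this
  have : f Q = c := by
    rw [hQeq, hfshift, hf00, zero_add]
  have hc0 : c = 0 := by rw [hf0] at this; exact this.symm
  funext s a
  simp [hQc s a, hc0]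
end
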